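/- arXiv:2004.08429 — 3 statements merged into one kernel-verified Lean document; each statement's English description precedes it below -/
import Mathlib

section
/- Let P be a d-dimensional polytope and v_1, ..., v_m distinct vertices of P with m ≤ d. Then there exist faces F_1, ..., F_m of P such that each F_i has dimension d - i + 1, and F_i contains v_i but does not contain v_j for any j < i. -/
open Set

/-- `C n m` : binomial coefficient with the convention `C n m = 0` for `n < 0`. -/
def C (n : ℤ) (m : ℕ) : ℤ := if n < 0 then 0 else (n.toNat).choose m

/-- Grünbaum's lower bound function `φ_k(d+s, d)`. -/
def phi (d s k : ℕ) : ℤ := C (d + 1) (k + 1) + C d (k + 1) - C ((d : ℤ) + 1 - s) (k + 1)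

/-- A polytope: convex hull of a finite set of points. -/
def IsPolytope {N : ℕ} (P : Set (EuclideanSpace ℝ (Fin N))) : Prop :=
  ∃ V : Finset (EuclideanSpace ℝ (Fin N)), P = convexHull ℝ (V : Set (EuclideanSpace ℝ (Fin N)))

/-- The dimension of a set: the dimension of its affine span. -/
noncomputable def pdim {N : ℕ} (P : Set (EuclideanSpace ℝ (Fin N))) : ℕ :=
  Module.finrank ℝ (affineSpan ℝ P).direction

/-- `F` is a face of `P`: the intersection of `P` with a supporting hyperplane
(the linear functional may be zero, so `P` itself is a face; `F` may be empty). -/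
def IsFace {N : ℕ} (P F : Set (EuclideanSpace ℝ (Fin N))) : Prop :=
  ∃ (f : EuclideanSpace ℝ (Fin N) →ₗ[ℝ] ℝ) (c : ℝ),
    (∀ x ∈ P, f x ≤ c) ∧ F = {x ∈ P | f x = c}

/-- The set of vertices of `P` (points whose singleton is a face of `P`). -/
def vertexSet {N : ℕ} (P : Set (EuclideanSpace ℝ (Fin N))) : Set (EuclideanSpace ℝ (Fin N)) :=
  {v | IsFace P {v}}

/-- The number of (nonempty) `k`-dimensional faces of `P`. -/
noncomputable def fCount {N : ℕ} (P : Set (EuclideanSpace ℝ (Fin N))) (k : ℕ) : ℕ :=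
  {F : Set (EuclideanSpace ℝ (Fin N)) | IsFace P F ∧ F.Nonempty ∧ pdim F = k}.ncard

/-- `P` is a `k`-dimensional simplex. -/
def IsSimplex {N : ℕ} (P : Set (EuclideanSpace ℝ (Fin N))) (k : ℕ) : Prop :=
  ∃ V : Finset (EuclideanSpace ℝ (Fin N)), V.card = k + 1 ∧
    AffineIndependent ℝ (Subtype.val : {x // x ∈ V} → EuclideanSpace ℝ (Fin N)) ∧
    P = convexHull ℝ (V : Set (EuclideanSpace ℝ (Fin N)))

/-- `Q` is a pyramid over `P`. -/
def IsPyramid {N : ℕ} (Q P : Set (EuclideanSpace ℝ (Fin N))) : Prop :=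
  ∃ x, x ∉ affineSpan ℝ P ∧ Q = convexHull ℝ (insert x P)

/-- `Q` is an `r`-fold pyramid over `P`. -/
def IsFoldPyramid {N : ℕ} : ℕ → Set (EuclideanSpace ℝ (Fin N)) → Set (EuclideanSpace ℝ (Fin N)) → Prop
  | 0, Q, P => Q = P
  | (r + 1), Q, P => ∃ R, IsFoldPyramid r R P ∧ IsPyramid Q R

/-- `Q` is a bipyramid over `P`: the two apices span a segment whose interior
meets the relative interior of `P`. -/
def IsBipyramid {N : ℕ} (Q P : Set (EuclideanSpace ℝ (Fin N))) : Prop :=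
  ∃ x y, x ∉ affineSpan ℝ P ∧ y ∉ affineSpan ℝ P ∧
    (openSegment ℝ x y ∩ intrinsicInterior ℝ P).Nonempty ∧
    Q = convexHull ℝ (P ∪ {x, y})

/-- `Q` is the direct sum (free sum) of `P₁` and `P₂`: their affine spans meet in a single
point that is in the relative interior of each. -/
def IsDirectSum {N : ℕ} (Q P₁ P₂ : Set (EuclideanSpace ℝ (Fin N))) : Prop :=
  ∃ z, (affineSpan ℝ P₁ : Set (EuclideanSpace ℝ (Fin N))) ∩ (affineSpan ℝ P₂) = {z} ∧
    z ∈ intrinsicInterior ℝ P₁ ∧ z ∈ intrinsicInterior ℝ P₂ ∧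
    Q = convexHull ℝ (P₁ ∪ P₂)

/-- Combinatorial equivalence: an inclusion-preserving bijection between face lattices. -/
def CombEquiv {N M : ℕ} (P : Set (EuclideanSpace ℝ (Fin N))) (Q : Set (EuclideanSpace ℝ (Fin M))) : Prop :=
  Nonempty ({F : Set (EuclideanSpace ℝ (Fin N)) // IsFace P F} ≃o
    {G : Set (EuclideanSpace ℝ (Fin M)) // IsFace Q G})

/-- `P` is combinatorially dual to `Q`: its face lattice is that of `Q` reversed. -/
def DualCombEquiv {N M : ℕ} (P : Set (EuclideanSpace ℝ (Fin N))) (Q : Set (EuclideanSpace ℝ (Fin M))) : Prop :=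
  Nonempty ({F : Set (EuclideanSpace ℝ (Fin N)) // IsFace P F} ≃o
    ({G : Set (EuclideanSpace ℝ (Fin M)) // IsFace Q G})ᵒᵈ)

/-- `P` (of dimension `d`) is simplicial: all its facets are simplices. -/
def IsSimplicial {N : ℕ} (P : Set (EuclideanSpace ℝ (Fin N))) (d : ℕ) : Prop :=
  ∀ F, IsFace P F → F.Nonempty → pdim F = d - 1 → IsSimplex F (d - 1)

/-!
Faces of a polytope are faces of its faces, so it suffices to show: if `v` is a vertex of a
polytope `Q` of positive dimension and `w ≠ v`, then `Q` has a facet containing `v` but not `w`.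
Applying this inside `P` with `w = v₁, …, v_{i-1}` in turn cuts `P` down to the face `Fᵢ`.
For the facet, start with a hyperplane exposing `v` and repeatedly tilt it by a functional that
is constant on the current face and on `w` but not on `Q`: `w` stays strictly below the
hyperplane, while the first new points of `Q` it hits raise the dimension of the exposed face,
until that face is a facet.
-/

open Module Filter Topology

lemma Finset.exists_pos_forall_add_mul_neg {ι : Type*} (s : Finset ι) {a : ι → ℝ} (b : ι → ℝ)
    (ha : ∀ i ∈ s, a i < 0) : ∃ ε > 0, ∀ i ∈ s, a i + ε * b i < 0 := by
  have hev : ∀ᶠ ε in 𝓝[>] (0 : ℝ), ∀ i ∈ s, a i + ε * b i < 0 := by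
    refine (eventually_all_finset s).2 fun i hi => ?_
    have hlim : Tendsto (fun ε : ℝ => a i + ε * b i) (𝓝[>] 0) (𝓝 (a i)) :=
      tendsto_nhdsWithin_of_tendsto_nhds <|
        (continuous_const.add (continuous_id.mul continuous_const)).tendsto' 0 (a i) (by simp)
    exact hlim.eventually (gt_mem_nhds (ha i hi))
  exact (hev.and self_mem_nhdsWithin).exists.imp fun ε h => ⟨h.2, h.1⟩

lemma Finset.exists_pos_forall_add_mul_nonpos {ι : Type*} {s : Finset ι} {a b : ι → ℝ}
    (ha : ∀ i ∈ s, a i ≤ 0) (hab : ∀ i ∈ s, 0 < b i → a i < 0) (hb : ∃ i ∈ s, 0 < b i) :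
    ∃ t > 0, (∀ i ∈ s, a i + t * b i ≤ 0) ∧ ∃ i ∈ s, 0 < b i ∧ a i + t * b i = 0 := by
  obtain ⟨k, hk, hmin⟩ := (s.filter (0 < b ·)).exists_min_image (fun i => -a i / b i) <| by
    obtain ⟨i, hi, hbi⟩ := hb
    exact ⟨i, Finset.mem_filter.2 ⟨hi, hbi⟩⟩
  obtain ⟨hks, hbk⟩ := Finset.mem_filter.1 hk
  have hak := hab k hks hbk
  refine ⟨-a k / b k, div_pos (neg_pos.2 hak) hbk, fun i hi => ?_, k, hks, hbk, by
    field_simp; ring⟩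
  rcases le_or_gt (b i) 0 with hbi | hbi
  · nlinarith [ha i hi, div_pos (neg_pos.2 hak) hbk]
  · have := hmin i (Finset.mem_filter.2 ⟨hi, hbi⟩)
    rw [le_div_iff₀ hbi] at this
    linarith

section Affine

variable {E : Type*} [AddCommGroup E] [Module ℝ E]

lemma vectorSpan_le_ker_iff {s : Set E} {v : E} (hv : v ∈ s) (ℓ : E →ₗ[ℝ] ℝ) :
    vectorSpan ℝ s ≤ LinearMap.ker ℓ ↔ ∀ a ∈ s, ℓ a = ℓ v := by
  rw [vectorSpan_eq_span_vsub_set_right ℝ hv, Submodule.span_le, Set.image_subset_iff]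
  simp only [Set.subset_def, Set.mem_preimage, SetLike.mem_coe, LinearMap.mem_ker, vsub_eq_sub,
    map_sub, sub_eq_zero]

variable [FiniteDimensional ℝ E]

lemma finrank_vectorSpan_lt_of_const {s t : Set E} {u v : E} {ℓ : E →ₗ[ℝ] ℝ} (hst : s ⊆ t)
    (hv : v ∈ s) (hu : u ∈ t) (hℓ : ∀ a ∈ s, ℓ a = ℓ v) (hne : ℓ u ≠ ℓ v) :
    finrank ℝ (vectorSpan ℝ s) < finrank ℝ (vectorSpan ℝ t) := by
  refine Submodule.finrank_lt_finrank_of_lt ((vectorSpan_mono ℝ hst).lt_of_ne fun heq => hne ?_)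
  exact (vectorSpan_le_ker_iff (hst hv) ℓ).1 (heq ▸ (vectorSpan_le_ker_iff hv ℓ).2 hℓ) u hu

lemma exists_const_lt_of_finrank_lt {s t : Set E} {v : E} (hvs : v ∈ s) (hvt : v ∈ t)
    (h : finrank ℝ (vectorSpan ℝ s) < finrank ℝ (vectorSpan ℝ t)) :
    ∃ ℓ : E →ₗ[ℝ] ℝ, (∀ a ∈ s, ℓ a = ℓ v) ∧ ∃ u ∈ t, ℓ v < ℓ u := by
  obtain ⟨x, hxt, hxs⟩ := SetLike.not_le_iff_exists.1 fun hle =>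
    (Submodule.finrank_mono hle).not_gt h
  obtain ⟨ℓ, hℓx, hℓs⟩ := Submodule.exists_dual_map_eq_bot_of_notMem hxs inferInstance
  rw [← LinearMap.le_ker_iff_map] at hℓs
  have ht : ¬ vectorSpan ℝ t ≤ LinearMap.ker ℓ := fun hle => hℓx (hle hxt)
  obtain ⟨u, hu, hne⟩ : ∃ u ∈ t, ℓ u ≠ ℓ v := by
    simpa [vectorSpan_le_ker_iff hvt] using ht
  have hconst := (vectorSpan_le_ker_iff hvs ℓ).1 hℓs
  rcases hne.lt_or_gt with hlt | hlt
  · exact ⟨-ℓ, fun a ha => by simp [hconst a ha], u, hu, by simpa using hlt⟩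
  · exact ⟨ℓ, hconst, u, hu, hlt⟩

end Affine

section ExposedFace

variable {E : Type*} [AddCommGroup E] [Module ℝ E]

/-- Faces of the polytope `convexHull M` are encoded by the points of `M` they contain
(see `ExposesFace.convexHull_eq`). -/
def ExposesFace (f : E →ₗ[ℝ] ℝ) (c : ℝ) (M S : Finset E) : Prop :=
  (∀ u ∈ M, f u ≤ c) ∧ S = M.filter (fun u => f u = c)

def IsExposedFace (M S : Finset E) : Prop :=
  ∃ (f : E →ₗ[ℝ] ℝ) (c : ℝ), ExposesFace f c M S

variable {f : E →ₗ[ℝ] ℝ} {c : ℝ} {M S T : Finset E} {u v w : E}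

lemma ExposesFace.mem_iff (h : ExposesFace f c M S) : u ∈ S ↔ u ∈ M ∧ f u = c := by
  rw [h.2, Finset.mem_filter]

lemma ExposesFace.subset (h : ExposesFace f c M S) : S ⊆ M :=
  fun _ hu => (h.mem_iff.1 hu).1

lemma ExposesFace.convexHull_eq (h : ExposesFace f c M S) :
    convexHull ℝ (S : Set E) = {x ∈ convexHull ℝ (M : Set E) | f x = c} := by
  refine Set.Subset.antisymm (fun x hx => ⟨convexHull_mono (Finset.coe_subset.2 h.subset) hx,
    convexHull_min (fun y hy => (h.mem_iff.1 hy).2) (convex_hyperplane f.isLinear c) hx⟩) ?_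
  rintro x ⟨hx, hfx⟩
  obtain ⟨μ, hμ0, hμ1, rfl⟩ := Finset.mem_convexHull'.1 hx
  have hsum : ∑ y ∈ M, μ y * f y = ∑ y ∈ M, μ y * c := by
    rw [← Finset.sum_mul, hμ1, one_mul, ← hfx, map_sum]
    simp only [map_smul, smul_eq_mul]
  have hterm := (Finset.sum_eq_sum_iff_of_le fun y hy =>
    mul_le_mul_of_nonneg_left (h.1 y hy) (hμ0 y hy)).1 hsum
  have hsupp : ∀ y ∈ M, y ∉ S → μ y = 0 := fun y hy hyS => by
    by_contra hμy
    exact hyS (h.mem_iff.2 ⟨hy, mul_left_cancel₀ hμy (hterm y hy)⟩)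
  refine Finset.mem_convexHull'.2 ⟨μ, fun y hy => hμ0 y (h.subset hy), ?_, ?_⟩
  · rw [Finset.sum_subset h.subset hsupp, hμ1]
  · exact Finset.sum_subset h.subset fun y hy hyS => by rw [hsupp y hy hyS, zero_smul]

lemma IsExposedFace.subset (h : IsExposedFace M S) : S ⊆ M :=
  let ⟨_, _, h⟩ := h; h.subset

lemma IsExposedFace.mem_of_mem_convexHull (h : IsExposedFace M S) (hu : u ∈ M)
    (huS : u ∈ convexHull ℝ (S : Set E)) : u ∈ S := by
  obtain ⟨f, c, h⟩ := h
  rw [h.convexHull_eq] at huS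
  exact h.mem_iff.2 ⟨hu, huS.2⟩

lemma IsExposedFace.mono (h : IsExposedFace M T) (hTS : T ⊆ S) (hSM : S ⊆ M) :
    IsExposedFace S T := by
  obtain ⟨f, c, hle, rfl⟩ := h
  refine ⟨f, c, fun x hx => hle x (hSM hx), Finset.ext fun x => ?_⟩
  simp only [Finset.mem_filter]
  exact ⟨fun hx => ⟨hTS (Finset.mem_filter.2 hx), hx.2⟩, fun hx => ⟨hSM hx.1, hx.2⟩⟩

/-- A face of a face is a face: tilt the outer functional slightly towards the inner one. -/
lemma IsExposedFace.trans (hS : IsExposedFace M S) (hT : IsExposedFace S T) :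
    IsExposedFace M T := by
  obtain ⟨f, c, hf⟩ := hS
  obtain ⟨g, e, hg⟩ := hT
  obtain ⟨ε, hε, hgap⟩ := (M.filter (f · < c)).exists_pos_forall_add_mul_neg
    (a := fun x => f x - c) (fun x => g x - e) fun x hx => sub_neg.2 (Finset.mem_filter.1 hx).2
  have hout : ∀ x ∈ M, f x < c → f x + ε * g x < c + ε * e := fun x hx hfx => by
    linarith [hgap x (Finset.mem_filter.2 ⟨hx, hfx⟩)]
  have hon : ∀ x ∈ M, f x = c → x ∈ S := fun x hx hfx => hf.mem_iff.2 ⟨hx, hfx⟩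
  refine ⟨f + ε • g, c + ε * e, fun x hx => ?_, Finset.ext fun x => ?_⟩
  · simp only [LinearMap.add_apply, LinearMap.smul_apply, smul_eq_mul]
    rcases (hf.1 x hx).lt_or_eq with hfx | hfx
    · exact (hout x hx hfx).le
    · nlinarith [hg.1 x (hon x hx hfx)]
  · simp only [Finset.mem_filter, LinearMap.add_apply, LinearMap.smul_apply, smul_eq_mul]
    constructor
    · intro hxT
      obtain ⟨hxS, hgx⟩ := hg.mem_iff.1 hxT
      rw [(hf.mem_iff.1 hxS).2, hgx]
      exact ⟨hf.subset hxS, rfl⟩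
    · rintro ⟨hx, hsum⟩
      rcases (hf.1 x hx).lt_or_eq with hfx | hfx
      · exact absurd hsum (hout x hx hfx).ne
      · rw [hfx, add_right_inj, mul_right_inj' hε.ne'] at hsum
        exact hg.mem_iff.2 ⟨hon x hx hfx, hsum⟩

variable [FiniteDimensional ℝ E]

lemma ExposesFace.finrank_lt (h : ExposesFace f c M S) (hv : v ∈ S) (hw : w ∈ M)
    (hwc : f w < c) :
    finrank ℝ (vectorSpan ℝ (S : Set E)) < finrank ℝ (vectorSpan ℝ (M : Set E)) := by
  have hfv := (h.mem_iff.1 hv).2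
  exact finrank_vectorSpan_lt_of_const (Finset.coe_subset.2 h.subset) hv hw
    (fun a ha => by rw [(h.mem_iff.1 ha).2, hfv]) (hfv ▸ hwc.ne)

/-- The rotation step: `ℓ` is constant on `S ∪ {w}` but not on `M`, and `f + t • ℓ` is tilted
until it supports `M` at a point off the affine span of `S`. -/
lemma ExposesFace.exists_finrank_lt (h : ExposesFace f c M S) (hv : v ∈ S) (hwc : f w < c)
    (hdim : finrank ℝ (vectorSpan ℝ (S : Set E)) + 1 < finrank ℝ (vectorSpan ℝ (M : Set E))) :
    ∃ (f' : E →ₗ[ℝ] ℝ) (c' : ℝ) (S' : Finset E), ExposesFace f' c' M S' ∧ v ∈ S' ∧ f' w < c' ∧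
      finrank ℝ (vectorSpan ℝ (S : Set E)) < finrank ℝ (vectorSpan ℝ (S' : Set E)) := by
  have hfv := (h.mem_iff.1 hv).2
  obtain ⟨ℓ, hℓ, u, hu, hvu⟩ := exists_const_lt_of_finrank_lt (Set.mem_insert_of_mem w hv)
    (h.subset hv) ((finrank_vectorSpan_insert_le_set ℝ (S : Set E) w).trans_lt hdim)
  have hℓS : ∀ a ∈ (S : Set E), ℓ a = ℓ v := fun a ha => hℓ a (Set.mem_insert_of_mem w ha)
  obtain ⟨t, ht, hle, u', hu', hvu', hu'eq⟩ := Finset.exists_pos_forall_add_mul_nonpos (s := M)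
    (a := fun x => f x - c) (b := fun x => ℓ x - ℓ v) (fun x hx => sub_nonpos.2 (h.1 x hx))
    (fun x hx hx' => sub_neg.2 <| (h.1 x hx).lt_of_ne fun hfx => by
      linarith [hℓS x (h.mem_iff.2 ⟨hx, hfx⟩)])
    ⟨u, hu, sub_pos.2 hvu⟩
  set S' := M.filter fun x => (f + t • ℓ) x = c + t * ℓ v
  have hS' : ExposesFace (f + t • ℓ) (c + t * ℓ v) M S' := ⟨fun x hx => by
    simp only [LinearMap.add_apply, LinearMap.smul_apply, smul_eq_mul]
    linarith [hle x hx], rfl⟩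
  have hSS' : (S : Set E) ⊆ S' := fun x hx => hS'.mem_iff.2 ⟨h.subset hx, by
    simp only [LinearMap.add_apply, LinearMap.smul_apply, smul_eq_mul]
    rw [(h.mem_iff.1 hx).2, hℓS x hx]⟩
  have hu'S' : u' ∈ S' := hS'.mem_iff.2 ⟨hu', by
    simp only [LinearMap.add_apply, LinearMap.smul_apply, smul_eq_mul]
    linarith⟩
  refine ⟨f + t • ℓ, c + t * ℓ v, S', hS', hSS' hv, ?_,
    finrank_vectorSpan_lt_of_const hSS' hv hu'S' hℓS (sub_pos.1 hvu').ne'⟩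
  simp only [LinearMap.add_apply, LinearMap.smul_apply, smul_eq_mul]
  rw [hℓ w (Set.mem_insert w _)]
  linarith

lemma IsExposedFace.exists_facet_of_mem (hv : IsExposedFace M {v}) (hw : w ∈ M) (hwv : w ≠ v)
    (hM : 0 < finrank ℝ (vectorSpan ℝ (M : Set E))) :
    ∃ S, IsExposedFace M S ∧ v ∈ S ∧ w ∉ S ∧
      finrank ℝ (vectorSpan ℝ (S : Set E)) + 1 = finrank ℝ (vectorSpan ℝ (M : Set E)) := by
  obtain ⟨g, e, hg⟩ := hv
  have hgw : g w < e := (hg.1 w hw).lt_of_ne fun hgw =>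
    hwv (Finset.mem_singleton.1 (hg.mem_iff.2 ⟨hw, hgw⟩))
  have hgrow : ∀ k < finrank ℝ (vectorSpan ℝ (M : Set E)), ∃ (f : E →ₗ[ℝ] ℝ) (c : ℝ) (S : Finset E),
      ExposesFace f c M S ∧ v ∈ S ∧ f w < c ∧ k ≤ finrank ℝ (vectorSpan ℝ (S : Set E)) := by
    intro k
    induction k with
    | zero => exact fun _ => ⟨g, e, {v}, hg, Finset.mem_singleton_self v, hgw, Nat.zero_le _⟩
    | succ k ih =>
      intro hk
      obtain ⟨f, c, S, hS, hvS, hwS, hkS⟩ := ih (by omega)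
      rcases hkS.lt_or_eq with hlt | heq
      · exact ⟨f, c, S, hS, hvS, hwS, hlt⟩
      · obtain ⟨f', c', S', hS', hvS', hwS', hlt⟩ := hS.exists_finrank_lt hvS hwS (by omega)
        exact ⟨f', c', S', hS', hvS', hwS', by omega⟩
  obtain ⟨f, c, S, hS, hvS, hwS, hdim⟩ := hgrow _ (Nat.sub_lt hM one_pos)
  have hlt := hS.finrank_lt hvS hw hwS
  exact ⟨S, ⟨f, c, hS⟩, hvS, fun hw' => hwS.ne (hS.mem_iff.1 hw').2, by omega⟩

lemma IsExposedFace.exists_facet (hv : IsExposedFace M {v}) (hwv : w ≠ v)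
    (hM : 0 < finrank ℝ (vectorSpan ℝ (M : Set E))) :
    ∃ S, IsExposedFace M S ∧ v ∈ S ∧ w ∉ S ∧
      finrank ℝ (vectorSpan ℝ (S : Set E)) + 1 = finrank ℝ (vectorSpan ℝ (M : Set E)) := by
  by_cases hw : w ∈ M
  · exact hv.exists_facet_of_mem hw hwv hM
  obtain ⟨w', hw', hw'v⟩ : ∃ w' ∈ M, w' ≠ v := by
    by_contra! hMv
    refine hM.ne' (Submodule.finrank_eq_zero.2 (eq_bot_iff.2 ?_))
    rw [← vectorSpan_singleton ℝ v]
    exact vectorSpan_mono ℝ fun x hx => Set.mem_singleton_iff.2 (hMv x hx)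
  obtain ⟨S, hS, hvS, -, hdim⟩ := hv.exists_facet_of_mem hw' hw'v hM
  exact ⟨S, hS, hvS, fun hwS => hw (hS.subset hwS), hdim⟩

lemma IsExposedFace.exists_disjoint (hv : IsExposedFace M {v}) (W : Finset E) (hvW : v ∉ W)
    (hW : W.card ≤ finrank ℝ (vectorSpan ℝ (M : Set E))) :
    ∃ S, IsExposedFace M S ∧ v ∈ S ∧ Disjoint S W ∧
      finrank ℝ (vectorSpan ℝ (S : Set E)) = finrank ℝ (vectorSpan ℝ (M : Set E)) - W.card := by
  classical
  induction W using Finset.induction_on with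
  | empty => exact ⟨M, ⟨0, 0, by simp, by simp⟩, hv.subset (Finset.mem_singleton_self v),
      Finset.disjoint_empty_right M, rfl⟩
  | insert w W hwW ih =>
    rw [Finset.card_insert_of_notMem hwW] at hW
    obtain ⟨S, hS, hvS, hSW, hdimS⟩ := ih (fun h => hvW (Finset.mem_insert_of_mem h)) (by omega)
    obtain ⟨S', hS', hvS', hwS', hdimS'⟩ :=
      (hv.mono (Finset.singleton_subset_iff.2 hvS) hS.subset).exists_facet
        (fun h => hvW (h ▸ Finset.mem_insert_self w W)) (by omega)
    refine ⟨S', hS.trans hS', hvS', Finset.disjoint_insert_right.2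
      ⟨hwS', hSW.mono_left hS'.subset⟩, ?_⟩
    rw [Finset.card_insert_of_notMem hwW]
    omega

end ExposedFace

section Polytope

variable {N : ℕ}

lemma pdim_eq_finrank_vectorSpan (s : Set (EuclideanSpace ℝ (Fin N))) :
    pdim s = finrank ℝ (vectorSpan ℝ s) := by
  rw [pdim, direction_affineSpan]

lemma pdim_convexHull (s : Set (EuclideanSpace ℝ (Fin N))) : pdim (convexHull ℝ s) = pdim s := by
  rw [pdim, affineSpan_convexHull, pdim]

lemma IsExposedFace.isFace_convexHull {M S : Finset (EuclideanSpace ℝ (Fin N))}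
    (h : IsExposedFace M S) :
    IsFace (convexHull ℝ (M : Set (EuclideanSpace ℝ (Fin N))))
      (convexHull ℝ (S : Set (EuclideanSpace ℝ (Fin N)))) := by
  obtain ⟨f, c, h⟩ := h
  exact ⟨f, c, fun x hx => convexHull_min h.1 (convex_halfSpace_le f.isLinear c) hx,
    h.convexHull_eq⟩

lemma isExposedFace_singleton_of_isFace {M : Finset (EuclideanSpace ℝ (Fin N))}
    {x : EuclideanSpace ℝ (Fin N)} (hx : IsFace (convexHull ℝ (M : Set _)) {x}) :
    IsExposedFace M {x} := by
  obtain ⟨f, c, hle, hfx⟩ := hx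
  have hS : ExposesFace f c M (M.filter fun u => f u = c) :=
    ⟨fun u hu => hle u (subset_convexHull ℝ _ hu), rfl⟩
  have hhull : convexHull ℝ ↑(M.filter fun u => f u = c) = {x} := hS.convexHull_eq.trans hfx.symm
  refine ⟨f, c, hS.1, ?_⟩
  have hsub : M.filter (fun u => f u = c) ⊆ {x} := fun u hu => by
    have := subset_convexHull ℝ _ (Finset.mem_coe.2 hu)
    rw [hhull] at this
    exact Finset.mem_singleton.2 this
  rcases Finset.subset_singleton_iff.1 hsub with hempty | hsingle
  · simp [hempty] at hhull
  · exact hsingle.symm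

end Polytope

theorem stmt3 {N : ℕ} (P : Set (EuclideanSpace ℝ (Fin N))) (d m : ℕ)
    (hP : IsPolytope P) (hdim : pdim P = d)
    (v : Fin m → EuclideanSpace ℝ (Fin N)) (hv : Function.Injective v)
    (hvert : ∀ i, v i ∈ vertexSet P) (hm : m ≤ d) :
    ∃ F : Fin m → Set (EuclideanSpace ℝ (Fin N)),
      ∀ i : Fin m, IsFace P (F i) ∧ pdim (F i) = d - (i : ℕ) ∧ v i ∈ F i ∧
        ∀ j : Fin m, j < i → v j ∉ F i := by
  obtain ⟨V, rfl⟩ := hP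
  rw [pdim_convexHull, pdim_eq_finrank_vectorSpan] at hdim
  have hvV : ∀ i, IsExposedFace V {v i} := fun i => isExposedFace_singleton_of_isFace (hvert i)
  have hcard : ∀ i : Fin m, ((Finset.Iio i).image v).card = i := fun i => by
    rw [Finset.card_image_of_injective _ hv, Fin.card_Iio]
  choose S hS using fun i : Fin m => (hvV i).exists_disjoint ((Finset.Iio i).image v)
    (by simp [hv.eq_iff]) (by rw [hcard, hdim]; omega)
  refine ⟨fun i => convexHull ℝ (S i : Set (EuclideanSpace ℝ (Fin N))), fun i => ?_⟩
  obtain ⟨hface, hvi, hdisj, hdimS⟩ := hS i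
  refine ⟨hface.isFace_convexHull, ?_, subset_convexHull ℝ _ hvi, fun j hj hvj => ?_⟩
  · rw [pdim_convexHull, pdim_eq_finrank_vectorSpan, hdimS, hcard, hdim]
  · have hvjV := (hvV j).subset (Finset.mem_singleton_self _)
    exact Finset.disjoint_left.1 hdisj (hface.mem_of_mem_convexHull hvjV hvj)
      (Finset.mem_image_of_mem v (Finset.mem_Iio.2 hj))
end

section
/- Let P be a d-dimensional polytope and {v_1, ..., v_m} a set of m ≤ d distinct vertices of P. Then the number of k-dimensional faces of P containing at least one of the v_i is at least Σ_{i=1}^{m} C(d-i+1, k). -/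
open Set

/-!
Order the vertices and count, for each `i`, the `k`-faces containing `v i` but none of the
earlier vertices. It then suffices to show that a `d`-polytope has at least `C(d - #W, k)`
`k`-faces through a vertex `u` avoiding a finite set `W ∌ u`. Cut `P` by a hyperplane `f = c`
separating `u` from the other vertices: the section `Q` is a `(d - 1)`-polytope whose
`(k - 1)`-faces extend injectively to `k`-faces of `P` through `u`, and such a face contains a
point `w ≠ u` only if its section contains a point `q w` of `Q`. A polytope of dimension `e`
has at least `C(e + 1 - #W', j + 1)` `j`-faces avoiding `W'`: run the same ordered count over
`e + 1 - #W'` of its vertices outside `W'` and sum with the hockey-stick identity. Applied to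
`Q` and `W' = q '' W`, this closes an induction on the dimension.
-/

open scoped Finset Topology

theorem finrank_vectorSpan_insert_of_notMem_affineSpan {k V P : Type*} [Field k] [AddCommGroup V]
    [Module k V] [AddTorsor V P] [FiniteDimensional k V] {s : Set P} {p : P} (hs : s.Nonempty)
    (hp : p ∉ affineSpan k s) :
    Module.finrank k (vectorSpan k (insert p s)) = Module.finrank k (vectorSpan k s) + 1 := by
  obtain ⟨p₀, hp₀⟩ := hs
  have hv : p -ᵥ p₀ ∉ vectorSpan k s := by
    rwa [← direction_affineSpan, AffineSubspace.vsub_right_mem_direction_iff_mem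
      (mem_affineSpan k hp₀)]
  rw [← direction_affineSpan, ← affineSpan_insert_affineSpan,
    AffineSubspace.direction_affineSpan_insert (mem_affineSpan k hp₀), direction_affineSpan,
    sup_comm, Submodule.finrank_sup_span_singleton hv]

section LevelCut

variable {E : Type*} [AddCommGroup E] [Module ℝ E] {f : E →ₗ[ℝ] ℝ} {c : ℝ} {u z : E}

variable (f c) in
/-- The point where the line through `u` and `z` meets the level set `f = c`. -/
noncomputable def cutPoint (u z : E) : E :=
  AffineMap.lineMap u z ((f u - c) / (f u - f z))

theorem apply_cutPoint (h : f z ≠ f u) : f (cutPoint f c u z) = c := by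
  have : f u - f z ≠ 0 := sub_ne_zero.2 h.symm
  simp only [cutPoint, AffineMap.lineMap_apply, vsub_eq_sub, vadd_eq_add, map_add, map_smul,
    map_sub, smul_eq_mul]
  field_simp
  ring

theorem cutPoint_mem_segment (hz : f z < c) (hc : c < f u) : cutPoint f c u z ∈ segment ℝ u z := by
  rw [segment_eq_image_lineMap]
  refine ⟨_, ⟨div_nonneg (by linarith) (by linarith), (div_le_one (by linarith)).2 (by linarith)⟩,
    rfl⟩

theorem convexHull_insert_inter_level {S : Finset E} (hS : ∀ z ∈ S, f z < c) (hc : c < f u) :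
    convexHull ℝ (insert u ↑S) ∩ {x | f x = c} = convexHull ℝ (cutPoint f c u '' ↑S) := by
  classical
  apply Set.Subset.antisymm
  · rintro x ⟨hx, hfx⟩
    rw [← Finset.coe_insert, Finset.mem_convexHull'] at hx
    obtain ⟨w, hw0, hw1, rfl⟩ := hx
    have huS : u ∉ S := fun h => (hS u h).not_gt hc
    rw [Finset.sum_insert huS] at hw1 hfx ⊢
    simp only [Set.mem_ofPred_eq, map_add, map_smul, map_sum, smul_eq_mul] at hfx
    set ν : E → ℝ := fun z => w z * (f u - f z) / (f u - c)
    have hν : ∑ z ∈ S, ν z = 1 := by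
      rw [← Finset.sum_div, div_eq_one_iff_eq (by linarith)]
      simp only [mul_sub, Finset.sum_sub_distrib, ← Finset.sum_mul]
      linear_combination (f u) * hw1 - hfx
    have hνcut : ∀ z ∈ S, ν z • cutPoint f c u z = ν z • u + w z • (z - u) := by
      intro z hz
      have hz' : f u - f z ≠ 0 := by linarith [hS z hz]
      have hc' : f u - c ≠ 0 := by linarith
      rw [cutPoint, AffineMap.lineMap_apply, vsub_eq_sub, vadd_eq_add, smul_add, smul_smul,
        add_comm]
      congr 2
      simp only [ν]
      field_simp
    have hx : w u • u + ∑ z ∈ S, w z • z = ∑ z ∈ S, ν z • cutPoint f c u z := by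
      rw [Finset.sum_congr rfl hνcut, Finset.sum_add_distrib, ← Finset.sum_smul, hν]
      simp only [smul_sub, Finset.sum_sub_distrib, ← Finset.sum_smul]
      rw [show ∑ z ∈ S, w z = 1 - w u by linarith, sub_smul]
      abel
    rw [hx]
    refine (convex_convexHull ℝ _).sum_mem (fun z hz => ?_) hν fun z hz =>
      subset_convexHull ℝ _ (Set.mem_image_of_mem _ hz)
    exact div_nonneg (mul_nonneg (hw0 z (Finset.mem_insert_of_mem hz)) (by linarith [hS z hz]))
      (by linarith)
  · refine convexHull_min ?_ ((convex_convexHull ℝ _).inter (convex_hyperplane f.isLinear c))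
    rintro _ ⟨z, hz, rfl⟩
    exact ⟨(convex_convexHull ℝ _).segment_subset (subset_convexHull ℝ _ (Set.mem_insert _ _))
        (subset_convexHull ℝ _ (Set.mem_insert_of_mem _ hz)) (cutPoint_mem_segment (hS z hz) hc),
      apply_cutPoint (by linarith [hS z hz])⟩

theorem affineSpan_insert_image_cutPoint {S : Set E} (hS : ∀ z ∈ S, f z ≠ f u) (hc : c ≠ f u) :
    affineSpan ℝ (insert u (cutPoint f c u '' S)) = affineSpan ℝ (insert u S) := by
  apply le_antisymm <;> rw [affineSpan_le, Set.insert_subset_iff] <;>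
    refine ⟨mem_affineSpan ℝ (Set.mem_insert _ _), ?_⟩
  · rintro _ ⟨z, hz, rfl⟩
    exact affineSpan_pair_le_of_mem_of_mem (mem_affineSpan ℝ (Set.mem_insert _ _))
      (mem_affineSpan ℝ (Set.mem_insert_of_mem _ hz)) (AffineMap.lineMap_mem_affineSpan_pair _ _ _)
  · intro z hz
    have ht : (f u - c) / (f u - f z) ≠ 0 :=
      div_ne_zero (sub_ne_zero.2 hc.symm) (sub_ne_zero.2 (hS z hz).symm)
    have hz' : z = AffineMap.lineMap u (cutPoint f c u z) ((f u - c) / (f u - f z))⁻¹ := by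
      rw [cutPoint, AffineMap.lineMap_lineMap_right, inv_mul_cancel₀ ht,
        AffineMap.lineMap_apply_one]
    rw [hz']
    exact affineSpan_pair_le_of_mem_of_mem (mem_affineSpan ℝ (Set.mem_insert _ _))
      (mem_affineSpan ℝ (Set.mem_insert_of_mem _ (Set.mem_image_of_mem _ hz)))
      (AffineMap.lineMap_mem_affineSpan_pair _ _ _)

theorem apply_eq_of_mem_affineSpan {S : Set E} (hS : ∀ z ∈ S, f z = c) {x : E}
    (hx : x ∈ affineSpan ℝ S) : f x = c := by
  have : affineSpan ℝ S ≤ (affineSpan ℝ {c}).comap f.toAffineMap := by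
    rw [affineSpan_le]
    intro z hz
    simp [hS z hz]
  simpa [AffineSubspace.mem_comap] using this hx

theorem finrank_vectorSpan_insert_eq_finrank_image_cutPoint [FiniteDimensional ℝ E] {S : Set E}
    (hS : S.Nonempty) (hSc : ∀ z ∈ S, f z < c) (hc : c < f u) :
    Module.finrank ℝ (vectorSpan ℝ (insert u S)) =
      Module.finrank ℝ (vectorSpan ℝ (cutPoint f c u '' S)) + 1 := by
  have hu : u ∉ affineSpan ℝ (cutPoint f c u '' S) := by
    intro hu
    have hcut : ∀ y ∈ cutPoint f c u '' S, f y = c := by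
      rintro _ ⟨z, hz, rfl⟩
      exact apply_cutPoint (by linarith [hSc z hz])
    linarith [apply_eq_of_mem_affineSpan hcut hu]
  rw [← direction_affineSpan, ← affineSpan_insert_image_cutPoint (fun z hz => by
    linarith [hSc z hz]) hc.ne, direction_affineSpan,
    finrank_vectorSpan_insert_of_notMem_affineSpan (hS.image _) hu]

end LevelCut

theorem sum_range_choose_sub_one_sub (n k : ℕ) :
    ∑ i ∈ Finset.range n, (n - 1 - i).choose k = n.choose (k + 1) := by
  induction n with
  | zero => simp
  | succ n ih =>
    rw [Finset.sum_range_succ', Nat.choose_succ_succ', ← ih, add_comm, Nat.add_sub_cancel,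
      Nat.sub_zero]
    congr 1
    refine Finset.sum_congr rfl fun i _ => ?_
    congr 1
    omega

section Polytope

variable {N : ℕ}

local notation "E" => EuclideanSpace ℝ (Fin N)

theorem IsFace.subset {P F : Set E} (h : IsFace P F) : F ⊆ P := by
  obtain ⟨f, c, -, rfl⟩ := h
  exact Set.sep_subset _ _

theorem isFace_self (P : Set E) : IsFace P P :=
  ⟨0, 0, fun _ _ => le_rfl, by simp⟩

theorem IsFace.convex {P F : Set E} (hP : Convex ℝ P) (h : IsFace P F) : Convex ℝ F := by
  obtain ⟨f, c, -, rfl⟩ := h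
  exact hP.inter (convex_hyperplane f.isLinear c)

variable {s : Finset (EuclideanSpace ℝ (Fin N))}

theorem IsFace.mem_of_weight_pos {F : Set E} (hF : IsFace (convexHull ℝ ↑s) F) {w : E → ℝ}
    (hw0 : ∀ y ∈ s, 0 ≤ w y) (hw1 : ∑ y ∈ s, w y = 1) (hF' : ∑ y ∈ s, w y • y ∈ F) {z : E}
    (hz : z ∈ s) (hwz : 0 < w z) : z ∈ F := by
  obtain ⟨f, c, hfc, rfl⟩ := hF
  have hle : ∀ y ∈ s, f y ≤ c := fun y hy => hfc y (subset_convexHull ℝ _ hy)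
  have hsum : ∑ y ∈ s, w y * (c - f y) = 0 := by
    have := hF'.2
    simp only [map_sum, map_smul, smul_eq_mul] at this
    simp only [mul_sub, Finset.sum_sub_distrib, ← Finset.sum_mul, hw1, this]
    ring
  have hz0 := (Finset.sum_eq_zero_iff_of_nonneg fun y hy =>
    mul_nonneg (hw0 y hy) (sub_nonneg.2 (hle y hy))).1 hsum z hz
  refine ⟨subset_convexHull ℝ _ hz, ?_⟩
  rcases mul_eq_zero.1 hz0 with h | h
  · exact absurd h hwz.ne'
  · linarith

theorem IsFace.eq_convexHull_inter {F : Set E} (hF : IsFace (convexHull ℝ ↑s) F) :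
    F = convexHull ℝ (↑s ∩ F) := by
  classical
  refine Set.Subset.antisymm (fun x hx => ?_)
    (convexHull_min Set.inter_subset_right (hF.convex (convex_convexHull ℝ _)))
  obtain ⟨w, hw0, hw1, rfl⟩ := Finset.mem_convexHull'.1 (hF.subset hx)
  have hpos : ∀ y ∈ s, w y ≠ 0 → 0 < w y := fun y hy h => (hw0 y hy).lt_of_ne' h
  rw [← Finset.sum_filter_of_ne fun y hy h => hpos y hy (left_ne_zero_of_smul h)]
  rw [← Finset.sum_filter_of_ne hpos] at hw1
  refine (convex_convexHull ℝ _).sum_mem (fun y hy => (Finset.mem_filter.1 hy).2.le) hw1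
    fun y hy => subset_convexHull ℝ _ ⟨(Finset.mem_filter.1 hy).1, ?_⟩
  obtain ⟨hy, hwy⟩ := Finset.mem_filter.1 hy
  exact hF.mem_of_weight_pos hw0 (by rwa [Finset.sum_filter_of_ne hpos] at hw1) hx hy hwy


theorem IsPolytope.finite_setOf_isFace {P : Set E} (hP : IsPolytope P) :
    {F | IsFace P F}.Finite := by
  obtain ⟨s, rfl⟩ := hP
  exact (s.finite_toSet.powerset.image (convexHull ℝ)).subset fun F hF =>
    ⟨_, Set.inter_subset_left, hF.eq_convexHull_inter.symm⟩

theorem pdim_convexHull_s4 (A : Set E) :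
    pdim (convexHull ℝ A) = Module.finrank ℝ (vectorSpan ℝ A) := by
  rw [pdim, ← direction_affineSpan, affineSpan_convexHull]

theorem pdim_singleton (x : E) : pdim {x} = 0 := by
  rw [pdim, direction_affineSpan, vectorSpan_singleton, finrank_bot]

theorem mem_of_mem_vertexSet {x : E} (hx : x ∈ vertexSet (convexHull ℝ ↑s)) : x ∈ s := by
  by_contra h
  have := IsFace.eq_convexHull_inter hx
  rw [Set.inter_singleton_eq_empty.2 h, convexHull_empty] at this
  exact Set.singleton_ne_empty x this

theorem mem_vertexSet_of_forall_lt (φ : E →ₗ[ℝ] ℝ) {x : E} (hx : x ∈ s)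
    (h : ∀ z ∈ s, z ≠ x → φ z < φ x) : x ∈ vertexSet (convexHull ℝ ↑s) := by
  have hle : ∀ y ∈ convexHull ℝ ↑s, φ y ≤ φ x := fun y hy =>
    convexHull_min (fun z hz => show φ z ≤ φ x from
      (eq_or_ne z x).elim (fun h => h ▸ le_rfl) fun hne => (h z hz hne).le)
      (convex_halfSpace_le φ.isLinear _) hy
  have hF : IsFace (convexHull ℝ ↑s) {y ∈ convexHull ℝ ↑s | φ y = φ x} := ⟨φ, φ x, hle, rfl⟩
  have hsF : ↑s ∩ {y ∈ convexHull ℝ ↑s | φ y = φ x} = {x} := by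
    ext z
    constructor
    · rintro ⟨hz, -, hφz⟩
      exact by_contra fun hzx => (h z hz hzx).ne hφz
    · rintro rfl
      exact ⟨hx, subset_convexHull ℝ _ hx, rfl⟩
  refine ⟨φ, φ x, hle, ?_⟩
  rw [hF.eq_convexHull_inter, hsF, convexHull_singleton]

theorem extremePoints_convexHull_subset_vertexSet :
    extremePoints ℝ (convexHull ℝ (s : Set E)) ⊆ vertexSet (convexHull ℝ ↑s) := by
  classical
  intro x hx
  have hx' : x ∉ convexHull ℝ (↑(s.erase x) : Set E) := by
    have hconv := ((convex_convexHull ℝ _).mem_extremePoints_iff_convex_sdiff.1 hx).2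
    intro h
    rw [Finset.coe_erase] at h
    exact (convexHull_min (Set.sdiff_subset_sdiff_left (subset_convexHull ℝ _)) hconv h).2 rfl
  obtain ⟨f, a, hf, hfx⟩ := geometric_hahn_banach_closed_point (convex_convexHull ℝ _)
    ((s.erase x).finite_toSet.isClosed_convexHull ℝ) hx'
  exact mem_vertexSet_of_forall_lt f.toLinearMap (extremePoints_convexHull_subset hx)
    fun z hz hzx => (hf z (subset_convexHull ℝ _ (Finset.mem_erase.2 ⟨hzx, hz⟩))).trans hfx

theorem IsPolytope.exists_finset_subset_vertexSet {P : Set E} (hP : IsPolytope P)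
    (hne : P.Nonempty) : ∃ T : Finset E, ↑T ⊆ vertexSet P ∧ pdim P + 1 ≤ #T := by
  obtain ⟨s, rfl⟩ := hP
  have hfin : (extremePoints ℝ (convexHull ℝ (s : Set E))).Finite :=
    s.finite_toSet.subset extremePoints_convexHull_subset
  have hconv : convexHull ℝ (extremePoints ℝ (convexHull ℝ (s : Set E))) = convexHull ℝ ↑s := by
    simpa [(hfin.isClosed_convexHull ℝ).closure_eq] using closure_convexHull_extremePoints
      (s.finite_toSet.isCompact_convexHull ℝ) (convex_convexHull ℝ _)
  refine ⟨hfin.toFinset, by simpa using extremePoints_convexHull_subset_vertexSet, ?_⟩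
  obtain ⟨x, hx⟩ : (extremePoints ℝ (convexHull ℝ (s : Set E))).Nonempty := by
    rwa [← convexHull_nonempty_iff (𝕜 := ℝ), hconv]
  have : Nonempty hfin.toFinset := ⟨⟨x, hfin.mem_toFinset.2 hx⟩⟩
  have hrange :
      Set.range (Subtype.val : hfin.toFinset → E) = extremePoints ℝ (convexHull ℝ ↑s) := by
    simp
  have := finrank_vectorSpan_range_add_one_le ℝ (Subtype.val : hfin.toFinset → E)
  rwa [hrange, Fintype.card_coe, ← pdim_convexHull_s4, hconv] at this

def kFaces (P : Set E) (k : ℕ) : Set (Set E) :=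
  {F | IsFace P F ∧ F.Nonempty ∧ pdim F = k}

theorem IsPolytope.finite_kFaces {P : Set E} (hP : IsPolytope P) (k : ℕ) : (kFaces P k).Finite :=
  hP.finite_setOf_isFace.subset fun _ hF => hF.1

variable {u : EuclideanSpace ℝ (Fin N)} {f : EuclideanSpace ℝ (Fin N) →ₗ[ℝ] ℝ} {c : ℝ}

theorem exists_separating_level_of_mem_vertexSet (hu : u ∈ vertexSet (convexHull ℝ ↑s)) :
    ∃ (f : E →ₗ[ℝ] ℝ) (c : ℝ), c < f u ∧ ∀ z ∈ s, z ≠ u → f z < c := by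
  classical
  obtain ⟨f, c₀, hle, heq⟩ := hu
  have hfu : f u = c₀ := (heq ▸ Set.mem_singleton u : u ∈ {x ∈ convexHull ℝ ↑s | f x = c₀}).2
  have hlt : ∀ z ∈ s.filter (· ≠ u), f z < c₀ := fun z hz => by
    obtain ⟨hz, hzu⟩ := Finset.mem_filter.1 hz
    refine (hle z (subset_convexHull ℝ _ hz)).lt_of_ne fun h => hzu ?_
    exact (heq ▸ ⟨subset_convexHull ℝ _ hz, h⟩ : z ∈ ({u} : Set E))
  have hev : ∀ᶠ c in 𝓝[<] c₀, c < c₀ ∧ ∀ z ∈ s.filter (· ≠ u), f z < c :=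
    eventually_mem_nhdsWithin.and <| (Filter.eventually_all_finset _).2 fun z hz =>
      (lt_mem_nhds (hlt z hz)).filter_mono nhdsWithin_le_nhds
  obtain ⟨c, hc, hcz⟩ := hev.exists
  exact ⟨f, c, hfu ▸ hc, fun z hz hzu => hcz z (Finset.mem_filter.2 ⟨hz, hzu⟩)⟩

theorem exists_mem_face_of_mem (hu : u ∈ s) {w : E} (hw : w ∈ convexHull ℝ ↑s) (hwu : w ≠ u) :
    ∃ z ∈ s, z ≠ u ∧ ∀ F, IsFace (convexHull ℝ ↑s) F → w ∈ F → z ∈ F := by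
  obtain ⟨a, ha0, ha1, rfl⟩ := Finset.mem_convexHull'.1 hw
  by_contra! h
  have hzero : ∀ z ∈ s, z ≠ u → a z = 0 := fun z hz hzu => by
    obtain ⟨F, hF, hwF, hzF⟩ := h z hz hzu
    exact le_antisymm (not_lt.1 fun hpos => hzF (hF.mem_of_weight_pos ha0 ha1 hwF hz hpos))
      (ha0 z hz)
  rw [Finset.sum_eq_single_of_mem u hu hzero] at ha1
  rw [Finset.sum_eq_single_of_mem u hu fun z hz hzu => by rw [hzero z hz hzu, zero_smul], ha1,
    one_smul] at hwu
  exact hwu rfl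

theorem exists_cutPoint_mem_face (hu : u ∈ s) (hcut : ∀ z ∈ s, z ≠ u → f z < c) (hc : c < f u) :
    ∃ q : E → E, ∀ F, IsFace (convexHull ℝ ↑s) F → u ∈ F → ∀ w ∈ F, w ≠ u →
      q w ∈ F ∩ {x | f x = c} := by
  choose! r hr using fun w (hw : w ∈ convexHull ℝ ↑s) (hwu : w ≠ u) =>
    exists_mem_face_of_mem hu hw hwu
  refine ⟨fun w => cutPoint f c u (r w), fun F hF huF w hwF hwu => ?_⟩
  obtain ⟨hrs, hru, hrF⟩ := hr w (hF.subset hwF) hwu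
  have hlt := hcut _ hrs hru
  exact ⟨(hF.convex (convex_convexHull ℝ _)).segment_subset huF (hrF F hF hwF)
    (cutPoint_mem_segment hlt hc), apply_cutPoint (by linarith)⟩

theorem IsFace.exists_inter_level_eq (hu : u ∈ s) (hcut : ∀ z ∈ s, z ≠ u → f z < c)
    (hc : c < f u) {F : Set E} (hF : IsFace (convexHull ℝ ↑s) F) (huF : u ∈ F) :
    ∃ t : Finset E, (∀ z ∈ t, f z < c) ∧ F = convexHull ℝ (insert u ↑t) ∧
      F ∩ {x | f x = c} = convexHull ℝ (cutPoint f c u '' ↑t) := by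
  classical
  have ht : ∀ z ∈ (s.filter (· ∈ F)).erase u, f z < c := fun z hz => by
    obtain ⟨hzu, hz⟩ := Finset.mem_erase.1 hz
    exact hcut z (Finset.mem_filter.1 hz).1 hzu
  have hF' : F = convexHull ℝ (insert u ↑((s.filter (· ∈ F)).erase u)) := by
    rw [Finset.coe_erase, Finset.coe_filter, Set.insert_sdiff_singleton,
      Set.insert_eq_of_mem (show u ∈ {x | x ∈ s ∧ x ∈ F} from ⟨hu, huF⟩)]
    exact hF.eq_convexHull_inter
  generalize (s.filter (· ∈ F)).erase u = t at ht hF'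
  refine ⟨t, ht, hF', ?_⟩
  rw [hF']
  exact convexHull_insert_inter_level ht hc

theorem IsFace.pdim_eq_pdim_inter_level_add_one (hu : u ∈ s)
    (hcut : ∀ z ∈ s, z ≠ u → f z < c) (hc : c < f u) {F : Set E}
    (hF : IsFace (convexHull ℝ ↑s) F) (huF : u ∈ F) (hne : (F ∩ {x | f x = c}).Nonempty) :
    pdim F = pdim (F ∩ {x | f x = c}) + 1 := by
  obtain ⟨t, ht, hFt, hFct⟩ := hF.exists_inter_level_eq hu hcut hc huF
  rw [hFct] at hne ⊢
  rw [hFt, pdim_convexHull_s4, pdim_convexHull_s4]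
  exact finrank_vectorSpan_insert_eq_finrank_image_cutPoint (by simpa using hne) ht hc

theorem exists_isFace_inter_level_eq (hu : u ∈ s) (hcut : ∀ z ∈ s, z ≠ u → f z < c)
    (hc : c < f u) {G : Set E} (hG : IsFace (convexHull ℝ ↑s ∩ {x | f x = c}) G) :
    ∃ F, IsFace (convexHull ℝ ↑s) F ∧ u ∈ F ∧ F ∩ {x | f x = c} = G := by
  obtain ⟨g, c₀, hg, rfl⟩ := hG
  -- tilt the functional `g` exposing `G` around the affine subspace `{f = c, g = c₀}` until it
  -- passes through `u`
  set h : E →ₗ[ℝ] ℝ := (c₀ - g u) • f + (f u - c) • g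
  have hlevel : ∀ x, f x = c → h x - h u = (f u - c) * (g x - c₀) := fun x hx => by
    simp only [h, LinearMap.add_apply, LinearMap.smul_apply, smul_eq_mul, hx]
    ring
  have hle : ∀ x ∈ convexHull ℝ ↑s, h x ≤ h u := by
    refine fun x hx => convexHull_min (fun z hz => ?_) (convex_halfSpace_le h.isLinear _) hx
    show h z ≤ h u
    rcases eq_or_ne z u with rfl | hzu
    · rfl
    have hzc := hcut z hz hzu
    have hy := cutPoint_mem_segment hzc hc
    have hyP : cutPoint f c u z ∈ convexHull ℝ ↑s := (convex_convexHull ℝ _).segment_subset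
      (subset_convexHull ℝ _ hu) (subset_convexHull ℝ _ hz) hy
    have hfy : f (cutPoint f c u z) = c := apply_cutPoint (by linarith)
    have hgy := hg _ ⟨hyP, hfy⟩
    have hline : h (cutPoint f c u z) - h u = (f u - c) / (f u - f z) * (h z - h u) := by
      simp only [cutPoint, AffineMap.lineMap_apply, vsub_eq_sub, vadd_eq_add, map_add, map_smul,
        map_sub, smul_eq_mul]
      ring
    have ht : 0 < (f u - c) / (f u - f z) := div_pos (by linarith) (by linarith)
    nlinarith [hlevel _ hfy]
  refine ⟨{x ∈ convexHull ℝ ↑s | h x = h u}, ⟨h, h u, hle, rfl⟩, ⟨subset_convexHull ℝ _ hu, rfl⟩,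
    Set.ext fun x => ⟨fun ⟨⟨hxP, hhx⟩, hfx⟩ => ⟨⟨hxP, hfx⟩, ?_⟩, fun ⟨⟨hxP, hfx⟩, hgx⟩ =>
      ⟨⟨hxP, ?_⟩, hfx⟩⟩⟩
  · have := hlevel x hfx
    rw [hhx, sub_self, eq_comm, mul_eq_zero, sub_eq_zero, sub_eq_zero] at this
    exact this.resolve_left hc.ne'
  · have := hlevel x hfx
    rwa [show g x = c₀ from hgx, sub_self, mul_zero, sub_eq_zero] at this

theorem ncard_kFaces_inter_level_le (hu : u ∈ s) (hcut : ∀ z ∈ s, z ≠ u → f z < c)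
    (hc : c < f u) {q : E → E} (hq : ∀ F, IsFace (convexHull ℝ ↑s) F → u ∈ F → ∀ w ∈ F, w ≠ u →
      q w ∈ F ∩ {x | f x = c}) {W : Set E} (huW : u ∉ W) (k : ℕ) :
    {G ∈ kFaces (convexHull ℝ ↑s ∩ {x | f x = c}) k | Disjoint G (q '' W)}.ncard ≤
      {F ∈ kFaces (convexHull ℝ ↑s) (k + 1) | u ∈ F ∧ Disjoint F W}.ncard := by
  choose! F hF using fun G (hG : IsFace (convexHull ℝ ↑s ∩ {x | f x = c}) G) =>
    exists_isFace_inter_level_eq hu hcut hc hG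
  refine Set.ncard_le_ncard_of_injOn F ?_ ?_
    ((IsPolytope.finite_kFaces ⟨s, rfl⟩ _).subset (Set.sep_subset _ _))
  · rintro G ⟨⟨hG, hGne, hGk⟩, hGW⟩
    obtain ⟨hFface, huF, hFG⟩ := hF G hG
    refine ⟨⟨hFface, ⟨u, huF⟩, ?_⟩, huF, Set.disjoint_left.2 fun w hwF hwW => ?_⟩
    · rw [hFface.pdim_eq_pdim_inter_level_add_one hu hcut hc huF (by rwa [hFG]), hFG, hGk]
    · exact Set.disjoint_left.1 hGW (hFG ▸ hq _ hFface huF w hwF (ne_of_mem_of_not_mem hwW huW))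
        (Set.mem_image_of_mem q hwW)
  · intro G hG G' hG' hGG'
    rw [← (hF G hG.1.1).2.2, ← (hF G' hG'.1.1).2.2, hGG']

theorem IsPolytope.exists_vertexFigure {P : Set E} (hP : IsPolytope P) (hu : u ∈ vertexSet P)
    (hpos : 0 < pdim P) :
    ∃ Q, IsPolytope Q ∧ Q.Nonempty ∧ pdim Q + 1 = pdim P ∧ ∃ q : E → E, ∀ W : Set E, u ∉ W →
      ∀ k, {G ∈ kFaces Q k | Disjoint G (q '' W)}.ncard ≤
        {F ∈ kFaces P (k + 1) | u ∈ F ∧ Disjoint F W}.ncard := by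
  classical
  obtain ⟨s, rfl⟩ := hP
  have hus := mem_of_mem_vertexSet hu
  obtain ⟨f, c, hc, hcut⟩ := exists_separating_level_of_mem_vertexSet hu
  obtain ⟨q, hq⟩ := exists_cutPoint_mem_face hus hcut hc
  have huP : u ∈ convexHull ℝ ↑s := subset_convexHull ℝ _ hus
  obtain ⟨t, -, hPt, hQt⟩ := (isFace_self _).exists_inter_level_eq hus hcut hc huP
  have hQne : (convexHull ℝ ↑s ∩ {x | f x = c}).Nonempty := by
    by_contra hQ
    rw [Set.not_nonempty_iff_eq_empty, hQt, convexHull_eq_empty, Set.image_eq_empty,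
      Finset.coe_eq_empty] at hQ
    rw [hPt, hQ, Finset.coe_empty, insert_empty_eq, convexHull_singleton, pdim_singleton] at hpos
    exact hpos.false
  exact ⟨_, ⟨t.image (cutPoint f c u), by rw [hQt, Finset.coe_image]⟩, hQne,
    ((isFace_self _).pdim_eq_pdim_inter_level_add_one hus hcut hc huP hQne).symm, q,
    fun W huW k => ncard_kFaces_inter_level_le hus hcut hc hq huW k⟩

def VertexFaceBound (P : Set E) : Prop :=
  ∀ u ∈ vertexSet P, ∀ W : Finset E, u ∉ W → ∀ k,
    (pdim P - #W).choose k ≤ {F ∈ kFaces P k | u ∈ F ∧ Disjoint F ↑W}.ncard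

theorem VertexFaceBound.sum_choose_le {P : Set E} (hb : VertexFaceBound P) (hP : IsPolytope P)
    (U W : Finset E) (hU : ↑U ⊆ vertexSet P) (hUW : Disjoint U W) (k : ℕ) :
    ∑ i ∈ Finset.range #U, (pdim P - #W - i).choose k ≤
      {F ∈ kFaces P k | Disjoint F ↑W ∧ ∃ u ∈ U, u ∈ F}.ncard := by
  classical
  induction U using Finset.induction_on generalizing W with
  | empty => simp
  | insert u U huU ih =>
    have hu : u ∈ vertexSet P := hU (Finset.mem_insert_self u U)
    have huW : u ∉ W := Finset.disjoint_left.1 hUW (Finset.mem_insert_self u U)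
    have ih' := ih (insert u W) (subset_trans (by simp) hU)
      (Finset.disjoint_insert_right.2 ⟨huU, (Finset.disjoint_insert_left.1 hUW).2⟩)
    have hfin := fun p : Set E → Prop => (hP.finite_kFaces k).subset (Set.sep_subset _ p)
    calc ∑ i ∈ Finset.range #(insert u U), (pdim P - #W - i).choose k
        = (pdim P - #W).choose k +
            ∑ i ∈ Finset.range #U, (pdim P - #(insert u W) - i).choose k := by
          rw [Finset.card_insert_of_notMem huU, Finset.sum_range_succ', add_comm,
            Finset.card_insert_of_notMem huW, Nat.sub_zero]
          congr 1
          refine Finset.sum_congr rfl fun i _ => ?_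
          congr 1
          omega
      _ ≤ {F ∈ kFaces P k | u ∈ F ∧ Disjoint F ↑W}.ncard +
          {F ∈ kFaces P k | Disjoint F ↑(insert u W) ∧ ∃ x ∈ U, x ∈ F}.ncard :=
          add_le_add (hb u hu W huW k) ih'
      _ = ({F ∈ kFaces P k | u ∈ F ∧ Disjoint F ↑W} ∪
          {F ∈ kFaces P k | Disjoint F ↑(insert u W) ∧ ∃ x ∈ U, x ∈ F}).ncard := by
          refine (Set.ncard_union_eq (Set.disjoint_left.2 fun F hF hF' => ?_) (hfin _)
            (hfin _)).symm
          exact Set.disjoint_left.1 hF'.2.1 hF.2.1 (by simp)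
      _ ≤ _ := by
          refine Set.ncard_le_ncard ?_ (hfin _)
          rintro F (⟨hF, huF, hFW⟩ | ⟨hF, hFW, x, hx, hxF⟩)
          · exact ⟨hF, hFW, u, Finset.mem_insert_self u U, huF⟩
          · rw [Finset.coe_insert, Set.disjoint_insert_right] at hFW
            exact ⟨hF, hFW.2, x, Finset.mem_insert_of_mem hx, hxF⟩

theorem VertexFaceBound.choose_succ_le_ncard {P : Set E} (hb : VertexFaceBound P)
    (hP : IsPolytope P) (hne : P.Nonempty) (W : Finset E) (k : ℕ) :
    (pdim P + 1 - #W).choose (k + 1) ≤ {F ∈ kFaces P k | Disjoint F (W : Set E)}.ncard := by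
  classical
  obtain ⟨T, hT, hTcard⟩ := hP.exists_finset_subset_vertexSet hne
  obtain ⟨U, hUT, hUcard⟩ := Finset.exists_subset_card_eq (s := T \ W) (n := pdim P + 1 - #W)
    (by have := Finset.le_card_sdiff W T; omega)
  calc (pdim P + 1 - #W).choose (k + 1)
      = ∑ i ∈ Finset.range #U, (pdim P - #W - i).choose k := by
        rw [hUcard, ← sum_range_choose_sub_one_sub]
        refine Finset.sum_congr rfl fun i _ => ?_
        congr 1
        omega
    _ ≤ {F ∈ kFaces P k | Disjoint F ↑W ∧ ∃ u ∈ U, u ∈ F}.ncard :=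
        hb.sum_choose_le hP U W (fun x hx => hT (Finset.mem_sdiff.1 (hUT hx)).1)
          (Finset.disjoint_left.2 fun x hx => (Finset.mem_sdiff.1 (hUT hx)).2) k
    _ ≤ _ := by
        refine Set.ncard_le_ncard ?_ ((hP.finite_kFaces k).subset (Set.sep_subset _ _))
        rintro F ⟨hF, hFW, -⟩
        exact ⟨hF, hFW⟩

theorem IsPolytope.vertexFaceBound {P : Set E} (hP : IsPolytope P) : VertexFaceBound P := by
  classical
  intro u hu W huW k
  cases k with
  | zero =>
    have hmem : {u} ∈ {F ∈ kFaces P 0 | u ∈ F ∧ Disjoint F ↑W} :=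
      ⟨⟨hu, Set.singleton_nonempty u, pdim_singleton u⟩, rfl, Set.disjoint_singleton_left.2 huW⟩
    rw [Nat.choose_zero_right]
    exact (Set.ncard_pos ((hP.finite_kFaces 0).subset (Set.sep_subset _ _))).2 ⟨_, hmem⟩
  | succ k =>
    rcases Nat.eq_zero_or_pos (pdim P) with h0 | hpos
    · simp [h0]
    obtain ⟨Q, hQ, hQne, hdim, q, hq⟩ := hP.exists_vertexFigure hu hpos
    calc (pdim P - #W).choose (k + 1)
        ≤ (pdim Q + 1 - #(W.image q)).choose (k + 1) :=
          Nat.choose_le_choose _ (by have := Finset.card_image_le (s := W) (f := q); omega)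
      _ ≤ {G ∈ kFaces Q k | Disjoint G ↑(W.image q)}.ncard :=
          (IsPolytope.vertexFaceBound hQ).choose_succ_le_ncard hQ hQne _ k
      _ ≤ _ := by simpa using hq W huW k
termination_by pdim P
decreasing_by omega

end Polytope

theorem stmt4_general {N : ℕ} (P : Set (EuclideanSpace ℝ (Fin N))) (d m k : ℕ)
    (hP : IsPolytope P) (hdim : pdim P = d)
    (v : Fin m → EuclideanSpace ℝ (Fin N)) (hv : Function.Injective v)
    (hvert : ∀ i, v i ∈ vertexSet P) :
    {F : Set (EuclideanSpace ℝ (Fin N)) |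
        IsFace P F ∧ F.Nonempty ∧ pdim F = k ∧ ∃ i, v i ∈ F}.ncard ≥
      ∑ i : Fin m, (d - (i : ℕ)).choose k := by
  classical
  have hbound := hP.vertexFaceBound.sum_choose_le hP (Finset.univ.image v) ∅
    (by simpa [Set.range_subset_iff] using hvert) (Finset.disjoint_empty_right _) k
  have hset : {F | IsFace P F ∧ F.Nonempty ∧ pdim F = k ∧ ∃ i, v i ∈ F} =
      {F ∈ kFaces P k | Disjoint F ↑(∅ : Finset (EuclideanSpace ℝ (Fin N))) ∧
        ∃ u ∈ Finset.univ.image v, u ∈ F} := by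
    ext F
    simp [kFaces, and_assoc]
  rw [ge_iff_le, hset, Fin.sum_univ_eq_sum_range (fun i => (d - i).choose k), ← hdim]
  simpa [Finset.card_image_of_injective _ hv] using hbound

theorem stmt4 {N : ℕ} (P : Set (EuclideanSpace ℝ (Fin N))) (d m k : ℕ)
    (hP : IsPolytope P) (hdim : pdim P = d)
    (v : Fin m → EuclideanSpace ℝ (Fin N)) (hv : Function.Injective v)
    (hvert : ∀ i, v i ∈ vertexSet P) (hm : m ≤ d) :
    {F : Set (EuclideanSpace ℝ (Fin N)) |
        IsFace P F ∧ F.Nonempty ∧ pdim F = k ∧ ∃ i, v i ∈ F}.ncard ≥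
      ∑ i : Fin m, (d - (i : ℕ)).choose k :=
  stmt4_general P d m k hP hdim v hv hvert
end

section
/- Every simplicial d-polytope with exactly d+2 vertices is combinatorially equivalent to T^d_m = T^m ⊕ T^{d-m} (the direct sum of simplices) for some 1 ≤ m ≤ d-1. -/
open Set

/-!
Let `E` be the `d + 2` vertices of `P`. If `E \ {v}` were affinely dependent for some vertex `v`,
it would span only a hyperplane avoiding `v`, so `conv (E \ {v})` would be a facet of `P` with
`d + 1` vertices, which is not a `(d - 1)`-simplex. Hence `E` is an affine circuit: up to scaling it
has a unique affine dependence, and no coefficient of it vanishes. Its positive and negative parts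
`A` and `B` are affinely independent, the normalised dependence writes one point `z` as a positive
combination of `A` and of `B` (so `z` lies in both relative interiors), and uniqueness of the
dependence forces `aff A ∩ aff B = {z}`. So `P` is itself the direct sum of the simplices
`conv A` and `conv B`, and each has at least two vertices because a vertex of `P` is never a convex
combination of other points of `P`.
-/

open Finset Module

section AffineCircuit

variable {V : Type*} [AddCommGroup V] [Module ℝ V]

lemma exists_sum_smul_eq_of_mem_affineSpan {A : Finset V} {x : V}
    (hx : x ∈ affineSpan ℝ (A : Set V)) :
    ∃ μ : V → ℝ, ∑ v ∈ A, μ v = 1 ∧ ∑ v ∈ A, μ v • v = x := by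
  classical
  rw [← Set.image_id (A : Set V)] at hx
  obtain ⟨s, w, hsA, hw1, rfl⟩ := eq_affineCombination_of_mem_affineSpan_image hx
  have hsA' : s ⊆ A := by exact_mod_cast hsA
  have hμ1 : ∑ v ∈ A, Set.indicator (↑s) w v = 1 := by rw [sum_indicator_subset _ hsA', hw1]
  refine ⟨Set.indicator (↑s) w, hμ1, ?_⟩
  rw [Finset.affineCombination_indicator_subset w id hsA',
    affineCombination_eq_linear_combination _ _ _ hμ1]
  rfl

def IsAffineDependence (E : Finset V) (f : V → ℝ) : Prop :=
  ∑ v ∈ E, f v = 0 ∧ ∑ v ∈ E, f v • v = 0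

namespace IsAffineDependence

variable {E : Finset V} {f g : V → ℝ}

lemma sub (hf : IsAffineDependence E f) (hg : IsAffineDependence E g) :
    IsAffineDependence E (f - g) := by
  constructor <;> simp [sub_smul, sum_sub_distrib, hf.1, hf.2, hg.1, hg.2]

lemma smul (hf : IsAffineDependence E f) (c : ℝ) : IsAffineDependence E (c • f) := by
  constructor <;> simp [mul_smul, ← mul_sum, ← smul_sum, hf.1, hf.2]

lemma sum_neg_filter_not_pos (hf : IsAffineDependence E f)
    (hf1 : ∑ v ∈ E with 0 < f v, f v = 1) : ∑ v ∈ E with ¬ 0 < f v, -f v = 1 := by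
  have := sum_filter_add_sum_filter_not E (fun v => 0 < f v) f
  rw [hf1, hf.1] at this
  rw [sum_neg_distrib]
  linarith

lemma sum_smul_filter_pos_eq (hf : IsAffineDependence E f) :
    ∑ v ∈ E with 0 < f v, f v • v = ∑ v ∈ E with ¬ 0 < f v, -f v • v := by
  have := sum_filter_add_sum_filter_not E (fun v => 0 < f v) (fun v => f v • v)
  rw [hf.2] at this
  simp only [neg_smul, sum_neg_distrib]
  exact eq_neg_of_add_eq_zero_left this

end IsAffineDependence

def IsAffineCircuit [DecidableEq V] (E : Finset V) : Prop :=
  ¬ AffineIndependent ℝ ((↑) : E → V) ∧ ∀ v ∈ E, AffineIndependent ℝ ((↑) : E.erase v → V)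

namespace IsAffineCircuit

variable [DecidableEq V] {E : Finset V}

lemma affineIndependent_of_subset (hE : IsAffineCircuit E) {A : Finset V} {b : V} (hAE : A ⊆ E)
    (hb : b ∈ E) (hbA : b ∉ A) : AffineIndependent ℝ ((↑) : A → V) :=
  (hE.2 b hb).mono fun _ hx => mem_erase.2 ⟨ne_of_mem_of_not_mem hx hbA, hAE hx⟩

lemma eq_zero_of_apply_eq_zero (hE : IsAffineCircuit E) {f : V → ℝ}
    (hf : IsAffineDependence E f) {v₀ : V} (hv₀ : v₀ ∈ E) (h : f v₀ = 0) : ∀ v ∈ E, f v = 0 := by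
  intro v hv
  rcases eq_or_ne v v₀ with rfl | hne
  · exact h
  · refine (hE.2 v₀ hv₀).eq_zero_of_sum_eq_zero_subtype ?_ ?_ v (mem_erase.2 ⟨hne, hv⟩)
    · rw [sum_erase _ h, hf.1]
    · rw [sum_erase _ (by rw [h, zero_smul]), hf.2]

lemma eq_mul_of_isAffineDependence (hE : IsAffineCircuit E) {f g : V → ℝ}
    (hf : IsAffineDependence E f) (hg : IsAffineDependence E g) {a : V} (ha : a ∈ E)
    (hfa : f a ≠ 0) : ∀ v ∈ E, g v = g a / f a * f v := by
  have hzero := hE.eq_zero_of_apply_eq_zero (hg.sub (hf.smul (g a / f a))) ha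
    (by simp [div_mul_cancel₀ _ hfa])
  intro v hv
  simpa [sub_eq_zero] using hzero v hv

lemma exists_isAffineDependence (hE : IsAffineCircuit E) :
    ∃ f : V → ℝ, IsAffineDependence E f ∧ (∀ v ∈ E, f v ≠ 0) ∧
      ∑ v ∈ E with 0 < f v, f v = 1 := by
  obtain ⟨f, hfv, hf0, x₀, hx₀, hfx₀⟩ := exists_nontrivial_relation_sum_zero_of_not_affine_ind hE.1
  have hf : IsAffineDependence E f := ⟨hf0, hfv⟩
  have hne : ∀ v ∈ E, f v ≠ 0 := fun v hv h =>
    hfx₀ (hE.eq_zero_of_apply_eq_zero hf hv h x₀ hx₀)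
  obtain ⟨a, ha, hfa⟩ : ∃ a ∈ E, 0 < f a := by
    by_contra! hnonpos
    exact hfx₀ ((sum_eq_zero_iff_of_nonpos hnonpos).1 hf0 x₀ hx₀)
  set s := ∑ v ∈ E with 0 < f v, f v
  have hs : 0 < s := sum_pos (fun v hv => (mem_filter.1 hv).2) ⟨a, mem_filter.2 ⟨ha, hfa⟩⟩
  refine ⟨s⁻¹ • f, hf.smul _, fun v hv => by simp [hs.ne', hne v hv], ?_⟩
  simp only [Pi.smul_apply, smul_eq_mul, mul_pos_iff_of_pos_left (inv_pos.2 hs)]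
  rw [← mul_sum, inv_mul_cancel₀ hs.ne']

lemma affineSpan_inter_affineSpan (hE : IsAffineCircuit E) {f : V → ℝ}
    (hf : IsAffineDependence E f) (hf0 : ∀ v ∈ E, f v ≠ 0)
    (hf1 : ∑ v ∈ E with 0 < f v, f v = 1) :
    (affineSpan ℝ (↑(E.filter (0 < f ·)) : Set V) : Set V) ∩
        affineSpan ℝ (↑(E.filter (¬ 0 < f ·)) : Set V) =
      {∑ v ∈ E with 0 < f v, f v • v} := by
  refine Set.Subset.antisymm (fun x ⟨hxA, hxB⟩ => ?_) (Set.singleton_subset_iff.2 ⟨?_, ?_⟩)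
  · obtain ⟨α, hα1, hαx⟩ := exists_sum_smul_eq_of_mem_affineSpan hxA
    obtain ⟨β, hβ1, hβx⟩ := exists_sum_smul_eq_of_mem_affineSpan hxB
    set γ : V → ℝ := fun v => if 0 < f v then α v else -β v
    have hγ : IsAffineDependence E γ := by
      constructor
      · rw [sum_ite, hα1, sum_neg_distrib, hβ1, add_neg_cancel]
      · simp only [γ, ite_smul, neg_smul]
        rw [sum_ite, hαx, sum_neg_distrib, hβx, add_neg_cancel]
    obtain ⟨a, ha⟩ : (E.filter (0 < f ·)).Nonempty :=
      nonempty_of_sum_ne_zero (by rw [hf1]; exact one_ne_zero)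
    obtain ⟨haE, hfa⟩ := mem_filter.1 ha
    have hγf := hE.eq_mul_of_isAffineDependence hf hγ haE (hf0 a haE)
    have ht : γ a / f a = 1 := calc
      γ a / f a = ∑ v ∈ E with 0 < f v, γ a / f a * f v := by rw [← mul_sum, hf1, mul_one]
      _ = ∑ v ∈ E with 0 < f v, α v := sum_congr rfl fun v hv => by
        rw [← hγf v (mem_filter.1 hv).1]
        simp [γ, (mem_filter.1 hv).2]
      _ = 1 := hα1
    rw [Set.mem_singleton_iff, ← hαx]
    refine sum_congr rfl fun v hv => ?_
    have := hγf v (mem_filter.1 hv).1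
    simp only [γ, (mem_filter.1 hv).2, if_true, ht, one_mul] at this
    rw [this]
  all_goals refine convexHull_subset_affineSpan _ (mem_convexHull'.2 ?_)
  · exact ⟨f, fun v hv => (mem_filter.1 hv).2.le, hf1, rfl⟩
  · exact ⟨fun v => -f v, fun v hv => neg_nonneg.2 (not_lt.1 (mem_filter.1 hv).2),
      hf.sum_neg_filter_not_pos hf1, hf.sum_smul_filter_pos_eq.symm⟩

end IsAffineCircuit

lemma finrank_vectorSpan_erase_of_not_affineIndependent [DecidableEq V] {E : Finset V} {d : ℕ}
    {v : V} (hcard : #E = d + 2) (hrank : finrank ℝ (vectorSpan ℝ (E : Set V)) = d) (hv : v ∈ E)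
    (hdep : ¬ AffineIndependent ℝ ((↑) : E.erase v → V)) :
    finrank ℝ (vectorSpan ℝ (↑(E.erase v) : Set V)) + 1 = d ∧
      v ∉ affineSpan ℝ (↑(E.erase v) : Set V) := by
  have hcard' : #(E.erase v) = d + 1 := by rw [card_erase_of_mem hv, hcard]; rfl
  obtain ⟨n, rfl⟩ : ∃ n, d = n + 1 := by
    refine Nat.exists_eq_add_one.2 (Nat.pos_of_ne_zero fun hd => hdep ?_)
    have : Subsingleton (E.erase v) := card_le_one_iff_subsingleton_coe.1 (by omega)
    exact affineIndependent_of_subsingleton ℝ _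
  have hle : finrank ℝ (vectorSpan ℝ (↑(E.erase v) : Set V)) ≤ n := by
    have := (finrank_vectorSpan_le_iff_not_affineIndependent ℝ ((↑) : E.erase v → V)
      (by simpa using hcard')).2 hdep
    rwa [show Set.range ((↑) : E.erase v → V) = ↑(E.erase v) from Subtype.range_coe] at this
  have hge := finrank_vectorSpan_insert_le_set ℝ (↑(E.erase v) : Set V) v
  rw [← coe_insert, insert_erase hv, hrank] at hge
  refine ⟨by omega, fun hmem => ?_⟩
  have hspan := affineSpan_insert_eq_affineSpan ℝ hmem
  rw [← coe_insert, insert_erase hv] at hspan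
  have : finrank ℝ (vectorSpan ℝ (E : Set V)) =
      finrank ℝ (vectorSpan ℝ (↑(E.erase v) : Set V)) := by
    rw [← direction_affineSpan, hspan, direction_affineSpan]
  omega

end AffineCircuit

section ConvexGeometry

lemma mem_of_mem_extremePoints_of_mem_convexHull {𝕜 V : Type*} [Field 𝕜] [LinearOrder 𝕜]
    [IsStrictOrderedRing 𝕜] [AddCommGroup V] [Module 𝕜 V] {P S : Set V} {x : V}
    (hx : x ∈ P.extremePoints 𝕜) (hSP : convexHull 𝕜 S ⊆ P) (hxS : x ∈ convexHull 𝕜 S) :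
    x ∈ S :=
  extremePoints_convexHull_subset
    (inter_extremePoints_subset_extremePoints_of_subset hSP ⟨hxS, hx⟩)

variable {V : Type*} [AddCommGroup V] [Module ℝ V]

lemma two_le_card_of_sum_smul_mem_convexHull {P : Set V} {S T : Finset V} {w : V → ℝ}
    (hw : ∑ v ∈ S, w v = 1) (hST : Disjoint S T) (hext : ∀ v ∈ S, v ∈ P.extremePoints ℝ)
    (hTP : convexHull ℝ (T : Set V) ⊆ P) (hz : ∑ v ∈ S, w v • v ∈ convexHull ℝ (T : Set V)) :
    2 ≤ #S := by
  by_contra! h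
  obtain ⟨a, rfl⟩ : ∃ a, S = {a} := card_eq_one.1 (le_antisymm (Nat.lt_succ_iff.1 h)
    (card_pos.2 (nonempty_of_sum_ne_zero (hw ▸ one_ne_zero))))
  rw [sum_singleton] at hw
  rw [sum_singleton, hw, one_smul] at hz
  exact disjoint_singleton_left.1 hST
    (mem_of_mem_extremePoints_of_mem_convexHull (hext a (mem_singleton_self a)) hTP hz)

lemma sep_convexHull_eq_convexHull_filter (S : Finset V) (f : V →ₗ[ℝ] ℝ) (c : ℝ)
    (hf : ∀ v ∈ S, f v ≤ c) :
    {x ∈ convexHull ℝ (S : Set V) | f x = c} = convexHull ℝ ↑(S.filter (f · = c)) := by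
  refine Set.Subset.antisymm ?_ (convexHull_min (fun v hv => ?_)
    ((convex_convexHull ℝ _).inter (convex_hyperplane f.isLinear c)))
  · rintro _ ⟨hx, hfx⟩
    obtain ⟨w, hw0, hw1, rfl⟩ := mem_convexHull'.1 hx
    have hslack : ∑ v ∈ S, w v * (c - f v) = 0 := by
      simp only [map_sum, map_smul, smul_eq_mul] at hfx
      simp only [mul_sub, sum_sub_distrib, ← sum_mul, hw1, one_mul, hfx, sub_self]
    have hsupp : ∀ v ∈ S, w v ≠ 0 → f v = c := fun v hv hwv => by
      have := (sum_eq_zero_iff_of_nonneg fun u hu =>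
        mul_nonneg (hw0 u hu) (sub_nonneg.2 (hf u hu))).1 hslack v hv
      linarith [(mul_eq_zero.1 this).resolve_left hwv]
    refine mem_convexHull'.2 ⟨w, fun v hv => hw0 v (mem_filter.1 hv).1, ?_, ?_⟩
    · rw [sum_filter_of_ne hsupp, hw1]
    · exact sum_filter_of_ne fun v hv hwv => hsupp v hv (left_ne_zero_of_smul hwv)
  · obtain ⟨hvS, hfv⟩ := mem_filter.1 hv
    exact ⟨subset_convexHull ℝ _ hvS, hfv⟩

end ConvexGeometry

section RelativeInterior

lemma mem_intrinsicInterior_of_isOpen {𝕜 V P : Type*} [Ring 𝕜] [AddCommGroup V] [Module 𝕜 V]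
    [TopologicalSpace P] [AddTorsor V P] {s U : Set P} {x : P} (hU : IsOpen U) (hxU : x ∈ U)
    (hxs : x ∈ s) (hUs : U ∩ affineSpan 𝕜 s ⊆ s) : x ∈ intrinsicInterior 𝕜 s :=
  ⟨⟨x, subset_affineSpan 𝕜 s hxs⟩, mem_interior.2 ⟨((↑) : affineSpan 𝕜 s → P) ⁻¹' U,
    fun y hy => hUs ⟨hy, y.2⟩, hU.preimage continuous_subtype_val, hxU⟩, rfl⟩

variable {V : Type*} [NormedAddCommGroup V] [NormedSpace ℝ V] [FiniteDimensional ℝ V]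

lemma AffineIndependent.sum_smul_mem_intrinsicInterior_convexHull {A : Finset V}
    (hA : AffineIndependent ℝ ((↑) : A → V)) {w : V → ℝ} (hw1 : ∑ v ∈ A, w v = 1)
    (hw : ∀ v ∈ A, 0 < w v) :
    ∑ v ∈ A, w v • v ∈ intrinsicInterior ℝ (convexHull ℝ (A : Set V)) := by
  -- the barycentric coordinates of an affine basis extending `A` are continuous on all of `V`
  obtain ⟨t, hAt, ht, htop⟩ := exists_subset_affineIndependent_affineSpan_eq_top hA
  have : Finite t := finite_set_of_fin_dim_affineIndependent ℝ ht
  let b : AffineBasis t ℝ V := ⟨(↑), ht, by rw [Subtype.range_coe]; exact htop⟩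
  have hcoord : ∀ μ : V → ℝ, ∑ v ∈ A, μ v = 1 → ∀ v (hv : v ∈ A),
      b.coord ⟨v, hAt hv⟩ (∑ u ∈ A, μ u • u) = μ v := by
    intro μ hμ v hv
    rw [show ∑ u ∈ A, μ u • u = A.affineCombination ℝ id μ from
      (A.affineCombination_eq_linear_combination id μ hμ).symm, A.map_affineCombination id μ hμ,
      A.affineCombination_eq_linear_combination _ μ hμ, sum_eq_single v]
    · change μ v * b.coord _ (b ⟨v, hAt hv⟩) = μ v
      rw [b.coord_apply_eq, mul_one]
    · intro u hu hne
      change μ u * b.coord _ (b ⟨u, hAt hu⟩) = 0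
      rw [b.coord_apply_ne fun h => hne (congrArg Subtype.val h).symm, mul_zero]
    · exact fun h => absurd hv h
  let U : Set V := ⋂ v : A, {x | 0 < b.coord ⟨v, hAt v.2⟩ x}
  have hU : IsOpen U := isOpen_iInter_of_finite fun v =>
    isOpen_lt continuous_const (b.coord _).continuous_of_finiteDimensional
  refine mem_intrinsicInterior_of_isOpen hU ?_
    (mem_convexHull'.2 ⟨w, fun v hv => (hw v hv).le, hw1, rfl⟩) ?_
  · refine Set.mem_iInter.2 fun v => ?_
    rw [Set.mem_ofPred_eq, hcoord w hw1 v v.2]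
    exact hw v v.2
  · rintro x ⟨hxU, hx⟩
    rw [SetLike.mem_coe, affineSpan_convexHull] at hx
    obtain ⟨μ, hμ1, rfl⟩ := exists_sum_smul_eq_of_mem_affineSpan hx
    refine mem_convexHull'.2 ⟨μ, fun v hv => ?_, hμ1, rfl⟩
    have := Set.mem_iInter.1 hxU ⟨v, hv⟩
    rw [Set.mem_ofPred_eq, hcoord μ hμ1 v hv] at this
    exact this.le

end RelativeInterior

section Polytope

variable {N : ℕ}

local notation "X" => EuclideanSpace ℝ (Fin N)

lemma isFace_convexHull_filter (S : Finset X) (f : X →ₗ[ℝ] ℝ) (c : ℝ) (hf : ∀ v ∈ S, f v ≤ c) :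
    IsFace (convexHull ℝ (S : Set X)) (convexHull ℝ ↑(S.filter (f · = c))) :=
  ⟨f, c, fun _ hx => convexHull_min hf (convex_halfSpace_le f.isLinear c) hx,
    (sep_convexHull_eq_convexHull_filter S f c hf).symm⟩

lemma vertexSet_subset_extremePoints (P : Set X) : vertexSet P ⊆ P.extremePoints ℝ := by
  rintro v ⟨f, c, hfP, hv⟩
  have hvP : v ∈ {x ∈ P | f x = c} := hv ▸ rfl
  refine exposedPoints_subset_extremePoints
    ⟨hvP.1, LinearMap.toContinuousLinearMap f, fun y hy => ⟨?_, fun h => ?_⟩⟩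
  · simpa [hvP.2] using hfP y hy
  · have : y ∈ ({v} : Set X) :=
      hv ▸ ⟨hy, le_antisymm (hfP y hy) (by simpa [hvP.2] using h)⟩
    exact this

lemma mem_vertexSet_of_mem_extremePoints (S : Finset X) {e : X}
    (he : e ∈ (convexHull ℝ (S : Set X)).extremePoints ℝ) :
    e ∈ vertexSet (convexHull ℝ (S : Set X)) := by
  have heS : e ∈ S := extremePoints_convexHull_subset he
  have hnot : e ∉ convexHull ℝ ↑(S.erase e) := fun h => notMem_erase e S
    (mem_of_mem_extremePoints_of_mem_convexHull he
      (convexHull_mono (coe_subset.2 (erase_subset e S))) h)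
  obtain ⟨f, u, hfu, hue⟩ := geometric_hahn_banach_closed_point (convex_convexHull ℝ _)
    ((S.erase e).finite_toSet.isClosed_convexHull ℝ) hnot
  have hlt : ∀ v ∈ S, v ≠ e → f v < f e := fun v hv hne =>
    (hfu v (subset_convexHull ℝ _ (mem_erase.2 ⟨hne, hv⟩))).trans hue
  have hfilter : S.filter ((f : X →ₗ[ℝ] ℝ) · = f e) = {e} := by
    ext v
    simp only [mem_filter, Finset.mem_singleton, ContinuousLinearMap.coe_coe]
    exact ⟨fun ⟨hv, h⟩ => by_contra fun hne => (hlt v hv hne).ne h,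
      fun h => h.symm ▸ ⟨heS, rfl⟩⟩
  have := isFace_convexHull_filter S (f : X →ₗ[ℝ] ℝ) (f e) fun v hv => by
    rcases eq_or_ne v e with rfl | hne
    · exact le_rfl
    · exact (hlt v hv hne).le
  rwa [hfilter, coe_singleton, convexHull_singleton] at this

lemma IsPolytope.exists_finset_eq_vertexSet {P : Set X} (hP : IsPolytope P) :
    ∃ E : Finset X, (E : Set X) = vertexSet P ∧ P = convexHull ℝ (E : Set X) := by
  obtain ⟨S, rfl⟩ := hP
  have hvert : vertexSet (convexHull ℝ (S : Set X)) =
      (convexHull ℝ (S : Set X)).extremePoints ℝ :=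
    (vertexSet_subset_extremePoints _).antisymm fun e he =>
      mem_vertexSet_of_mem_extremePoints S he
  have hfin : (vertexSet (convexHull ℝ (S : Set X))).Finite :=
    hvert ▸ S.finite_toSet.subset extremePoints_convexHull_subset
  refine ⟨hfin.toFinset, hfin.coe_toFinset, ?_⟩
  have hKM := closure_convexHull_extremePoints (S.finite_toSet.isCompact_convexHull ℝ)
    (convex_convexHull ℝ (S : Set X))
  rw [hfin.coe_toFinset, hvert]
  rwa [← hvert, (hfin.isClosed_convexHull ℝ).closure_eq, hvert, eq_comm] at hKM

lemma isFace_convexHull_of_notMem_affineSpan {W : Finset X} {v₀ : X} (hW : W.Nonempty)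
    (hv₀ : v₀ ∉ affineSpan ℝ (W : Set X)) :
    IsFace (convexHull ℝ ↑(insert v₀ W)) (convexHull ℝ (W : Set X)) := by
  obtain ⟨w₀, hw₀⟩ := hW
  have hw₀' : w₀ ∈ affineSpan ℝ (W : Set X) := subset_affineSpan ℝ _ hw₀
  have hx : v₀ -ᵥ w₀ ∉ vectorSpan ℝ (W : Set X) := by
    rwa [← direction_affineSpan, AffineSubspace.vsub_right_mem_direction_iff_mem hw₀']
  obtain ⟨g, hgx, hgW⟩ := Submodule.exists_dual_map_eq_bot_of_notMem hx inferInstance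
  set h : X →ₗ[ℝ] ℝ := -(g (v₀ -ᵥ w₀))⁻¹ • g
  have hconst : ∀ w ∈ W, h w = h w₀ := fun w hw => by
    have : g (w -ᵥ w₀) = 0 :=
      (Submodule.mem_bot ℝ).1 (hgW ▸ Submodule.mem_map_of_mem (vsub_mem_vectorSpan ℝ hw hw₀))
    rw [vsub_eq_sub, map_sub, sub_eq_zero] at this
    simp [h, this]
  have hv₀' : h v₀ = h w₀ - 1 := by
    have : h (v₀ -ᵥ w₀) = -1 := by
      change -(g (v₀ -ᵥ w₀))⁻¹ * g (v₀ -ᵥ w₀) = -1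
      rw [neg_mul, inv_mul_cancel₀ hgx]
    rw [vsub_eq_sub, map_sub] at this
    linarith
  have hfilter : (insert v₀ W).filter (h · = h w₀) = W := by
    rw [filter_insert, if_neg (by linarith), filter_true_of_mem hconst]
  have := isFace_convexHull_filter (insert v₀ W) h (h w₀) fun v hv => by
    rcases mem_insert.1 hv with rfl | hv
    · linarith
    · exact (hconst v hv).le
  rwa [hfilter] at this

lemma IsSimplex.card_le_of_subset_vertexSet {P F : Set X} {k : ℕ} (hS : IsSimplex F k)
    (hF : IsFace P F) {W : Finset X} (hWV : ↑W ⊆ vertexSet P) (hWF : ↑W ⊆ F) : #W ≤ k + 1 := by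
  obtain ⟨S, hcard, -, rfl⟩ := hS
  obtain ⟨f, c, -, hFP⟩ := hF
  rw [← hcard]
  exact card_le_card fun w hw => mem_of_mem_extremePoints_of_mem_convexHull
    (vertexSet_subset_extremePoints P (hWV hw)) (hFP ▸ Set.sep_subset _ _) (hWF hw)

lemma isAffineCircuit_of_isSimplicial {P : Set X} {d : ℕ} {E : Finset X}
    (hEV : (E : Set X) = vertexSet P) (hEP : P = convexHull ℝ (E : Set X)) (hcard : #E = d + 2)
    (hdim : pdim P = d) (hP : IsSimplicial P d) : IsAffineCircuit E := by
  have hrank : finrank ℝ (vectorSpan ℝ (E : Set X)) = d := by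
    rw [← direction_affineSpan, ← affineSpan_convexHull, ← hEP]
    exact hdim
  refine ⟨fun hind => ?_, fun v hv => by_contra fun hdep => ?_⟩
  · have := hind.finrank_vectorSpan (n := d + 1) (by simpa using hcard)
    rw [show Set.range ((↑) : E → X) = ↑E from Subtype.range_coe] at this
    omega
  · obtain ⟨hrankW, hvW⟩ := finrank_vectorSpan_erase_of_not_affineIndependent hcard hrank hv hdep
    have hW : (E.erase v).Nonempty := by
      rw [← card_pos, card_erase_of_mem hv, hcard]
      omega
    have hface := isFace_convexHull_of_notMem_affineSpan hW hvW
    rw [insert_erase hv, ← hEP] at hface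
    have hpdim : pdim (convexHull ℝ (↑(E.erase v) : Set X)) = d - 1 := by
      rw [pdim, affineSpan_convexHull, direction_affineSpan]
      omega
    have hsimplex := hP _ hface (convexHull_nonempty_iff.2 (coe_nonempty.2 hW)) hpdim
    have := hsimplex.card_le_of_subset_vertexSet hface (hEV ▸ coe_subset.2 (erase_subset v E))
      (subset_convexHull ℝ _)
    rw [card_erase_of_mem hv, hcard] at this
    omega

lemma IsAffineCircuit.exists_isDirectSum {E : Finset X} (hE : IsAffineCircuit E)
    (hext : ∀ v ∈ E, v ∈ (convexHull ℝ (E : Set X)).extremePoints ℝ) :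
    ∃ A B : Finset X, 2 ≤ #A ∧ 2 ≤ #B ∧ #A + #B = #E ∧ AffineIndependent ℝ ((↑) : A → X) ∧
      AffineIndependent ℝ ((↑) : B → X) ∧
      IsDirectSum (convexHull ℝ (E : Set X)) (convexHull ℝ (A : Set X))
        (convexHull ℝ (B : Set X)) := by
  obtain ⟨f, hf, hf0, hf1⟩ := hE.exists_isAffineDependence
  set A := E.filter (0 < f ·)
  set B := E.filter (¬ 0 < f ·)
  have hB1 : ∑ v ∈ B, -f v = 1 := hf.sum_neg_filter_not_pos hf1
  have hzB : ∑ v ∈ A, f v • v = ∑ v ∈ B, -f v • v := hf.sum_smul_filter_pos_eq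
  have hAB : Disjoint A B := disjoint_filter_filter_not E E _
  have hApos : ∀ v ∈ A, 0 < f v := fun v hv => (mem_filter.1 hv).2
  have hBpos : ∀ v ∈ B, 0 < -f v := fun v hv => by
    obtain ⟨hvE, hv⟩ := mem_filter.1 hv
    exact neg_pos.2 ((not_lt.1 hv).lt_of_ne (hf0 v hvE))
  have hsub : ∀ S ⊆ E, convexHull ℝ (S : Set X) ⊆ convexHull ℝ (E : Set X) := fun S hS =>
    convexHull_mono (coe_subset.2 hS)
  have hzA : ∑ v ∈ A, f v • v ∈ convexHull ℝ (A : Set X) :=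
    mem_convexHull'.2 ⟨f, fun v hv => (hApos v hv).le, hf1, rfl⟩
  have hzB' : ∑ v ∈ A, f v • v ∈ convexHull ℝ (B : Set X) :=
    mem_convexHull'.2 ⟨fun v => -f v, fun v hv => (hBpos v hv).le, hB1, hzB.symm⟩
  have hA2 : 2 ≤ #A := two_le_card_of_sum_smul_mem_convexHull hf1 hAB
    (fun v hv => hext v (mem_filter.1 hv).1) (hsub B (filter_subset _ _)) hzB'
  have hB2 : 2 ≤ #B := two_le_card_of_sum_smul_mem_convexHull hB1 hAB.symm
    (fun v hv => hext v (mem_filter.1 hv).1) (hsub A (filter_subset _ _)) (hzB ▸ hzA)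
  obtain ⟨a, ha⟩ := card_pos.1 (by omega : 0 < #A)
  obtain ⟨b, hb⟩ := card_pos.1 (by omega : 0 < #B)
  have hAind := hE.affineIndependent_of_subset (filter_subset _ E) (mem_filter.1 hb).1
    (disjoint_right.1 hAB hb)
  have hBind := hE.affineIndependent_of_subset (filter_subset _ E) (mem_filter.1 ha).1
    (disjoint_left.1 hAB ha)
  refine ⟨A, B, hA2, hB2, card_filter_add_card_filter_not _, hAind, hBind,
    ∑ v ∈ A, f v • v, ?_, hAind.sum_smul_mem_intrinsicInterior_convexHull hf1 hApos, ?_, ?_⟩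
  · rw [affineSpan_convexHull, affineSpan_convexHull]
    exact hE.affineSpan_inter_affineSpan hf hf0 hf1
  · rw [hzB]
    exact hBind.sum_smul_mem_intrinsicInterior_convexHull hB1 hBpos
  · rw [convexHull_convexHull_union_left, convexHull_convexHull_union_right, ← coe_union,
      filter_union_filter_not_eq]

end Polytope

theorem stmt14 {N : ℕ} (P : Set (EuclideanSpace ℝ (Fin N))) (d : ℕ)
    (hP : IsPolytope P) (hdim : pdim P = d)
    (hsimplicial : IsSimplicial P d) (hvert : (vertexSet P).ncard = d + 2) :
    ∃ m, 1 ≤ m ∧ m ≤ d - 1 ∧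
      ∃ (M : ℕ) (S₁ S₂ T : Set (EuclideanSpace ℝ (Fin M))),
        IsSimplex S₁ m ∧ IsSimplex S₂ (d - m) ∧ IsDirectSum T S₁ S₂ ∧ CombEquiv P T := by
  obtain ⟨E, hEV, hEP⟩ := hP.exists_finset_eq_vertexSet
  have hcard : #E = d + 2 := by rw [← hvert, ← hEV, Set.ncard_coe_finset]
  obtain ⟨A, B, hA, hB, hAB, hAind, hBind, hsum⟩ :=
    (isAffineCircuit_of_isSimplicial hEV hEP hcard hdim hsimplicial).exists_isDirectSum
      fun v hv => hEP ▸ vertexSet_subset_extremePoints P (hEV ▸ hv)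
  rw [← hEP] at hsum
  exact ⟨#A - 1, by omega, by omega, N, _, _, P, ⟨A, by omega, hAind, rfl⟩,
    ⟨B, by omega, hBind, rfl⟩, hsum, ⟨OrderIso.refl _⟩⟩
end
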